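/- arXiv:1301.4769 — 9 statements merged into one kernel-verified Lean document; each statement's English description precedes it below -/
import Mathlib

section
/- For any signed graph (G,Y), the correlation clustering index Δ(Y) equals 0 if and only if G contains no bad cycle, i.e., no simple cycle containing exactly one negative edge. -/
open scoped Classical

/-- Cost of a clustering `f` of the vertices: number of negative within-cluster edges
plus positive between-cluster edges. -/
noncomputable def clusterCost {V : Type*} [Fintype V] {β : Type*}
    (G : SimpleGraph V) (Y : Sym2 V → ℤ) (f : V → β) : ℕ :=
  (G.edgeFinset.filter fun e =>
    (Y e = -1 ∧ Sym2.lift ⟨fun u v => f u = f v, fun _ _ => propext eq_comm⟩ e) ∨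
    (Y e = 1 ∧ ¬ Sym2.lift ⟨fun u v => f u = f v, fun _ _ => propext eq_comm⟩ e)).card

/-- Correlation clustering index Δ(Y): minimum cost over all partitions of `V`. -/
noncomputable def ccIndex {V : Type*} [Fintype V] (G : SimpleGraph V) (Y : Sym2 V → ℤ) : ℕ :=
  sInf {c | ∃ f : V → ℕ, clusterCost G Y f = c}

/-- A bad cycle: a simple cycle containing exactly one negative edge. -/
def IsBadCycle {V : Type*} (G : SimpleGraph V) (Y : Sym2 V → ℤ) {v : V}
    (c : G.Walk v v) : Prop :=
  c.IsCycle ∧ c.edges.countP (fun e => decide (Y e = -1)) = 1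

/-- Cost zero means every positive edge is within a cluster, every negative edge between. -/
lemma clusterCost_eq_zero_iff {V : Type*} [Fintype V] {β : Type*}
    (G : SimpleGraph V) (Y : Sym2 V → ℤ) (f : V → β) :
    clusterCost G Y f = 0 ↔ ∀ u v, G.Adj u v →
      (Y s(u, v) = 1 → f u = f v) ∧ (Y s(u, v) = -1 → f u ≠ f v) := by
  rw [clusterCost, Finset.card_eq_zero, Finset.filter_eq_empty_iff]
  constructor
  · intro h u v huv
    have := h (SimpleGraph.mem_edgeFinset.2 (G.mem_edgeSet.2 huv))
    simp only [Sym2.lift_mk] at this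
    push_neg at this
    exact ⟨fun h1 => this.2 h1, fun hm => this.1 hm⟩
  · intro h e he
    induction e with
    | _ u v =>
      rw [SimpleGraph.mem_edgeFinset, SimpleGraph.mem_edgeSet] at he
      have := h u v he
      simp only [Sym2.lift_mk]
      push_neg
      exact ⟨fun hm => this.2 hm, fun h1 => this.1 h1⟩

lemma walk_count {V : Type*} [Fintype V]
    (G : SimpleGraph V) (Y : Sym2 V → ℤ) (f : V → ℕ)
    (h0 : clusterCost G Y f = 0)
    (hY : ∀ e ∈ G.edgeSet, Y e = 1 ∨ Y e = -1) :
    ∀ {u v : V} (w : G.Walk u v),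
      (w.edges.countP (fun e => decide (Y e = -1)) = 0 → f u = f v) ∧
      (w.edges.countP (fun e => decide (Y e = -1)) = 1 → f u ≠ f v) := by
  rw [clusterCost_eq_zero_iff] at h0
  intro u v w
  induction w with
  | nil => simp
  | cons hadj w ih =>
    rename_i a b c
    have hY' := hY s(a, b) hadj
    have hh := h0 a b hadj
    rcases hY' with h1 | hm
    · have hfa : f a = f b := hh.1 h1
      simp only [SimpleGraph.Walk.edges_cons, List.countP_cons]
      have : (decide (Y s(a, b) = -1)) = false := by simp [h1]
      rw [this]
      simpa [hfa] using ih
    · have hfa : f a ≠ f b := hh.2 hm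
      simp only [SimpleGraph.Walk.edges_cons, List.countP_cons]
      have : (decide (Y s(a, b) = -1)) = true := by simp [hm]
      rw [this]
      simp only [if_true, Nat.add_eq_zero]
      constructor
      · omega
      · intro hcnt
        have : w.edges.countP (fun e => decide (Y e = -1)) = 0 := by omega
        have hbc : f b = f c := ih.1 this
        rw [← hbc]
        exact hfa

theorem stmt0 {V : Type*} [Fintype V] (G : SimpleGraph V) (Y : Sym2 V → ℤ)
    (hY : ∀ e ∈ G.edgeSet, Y e = 1 ∨ Y e = -1) :
    ccIndex G Y = 0 ↔ ∀ (v : V) (c : G.Walk v v), ¬ IsBadCycle G Y c := by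
  constructor
  · -- ccIndex = 0 → no bad cycle
    intro h v c hbad
    rw [ccIndex, Nat.sInf_eq_zero] at h
    have h0 : ∃ f : V → ℕ, clusterCost G Y f = 0 := by
      rcases h with h | h
      · exact h
      · exfalso
        have : clusterCost G Y (fun _ => 0) ∈ {c | ∃ f : V → ℕ, clusterCost G Y f = c} :=
          ⟨_, rfl⟩
        rw [h] at this
        exact this
    obtain ⟨f, hf⟩ := h0
    exact (walk_count G Y f hf hY c).2 hbad.2 rfl
  · -- no bad cycle → ccIndex = 0
    intro h
    -- positive subgraph
    set Gp : SimpleGraph V := G.deleteEdges {e | ¬ Y e = 1} with hGp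
    have hGple : Gp ≤ G := SimpleGraph.deleteEdges_le _
    have hGpadj : ∀ u v, Gp.Adj u v ↔ G.Adj u v ∧ Y s(u, v) = 1 := by
      intro u v
      rw [hGp, SimpleGraph.deleteEdges_adj]
      simp
    -- edges of Gp walks are positive
    have hGpedge : ∀ e ∈ Gp.edgeSet, Y e = 1 := by
      intro e he
      induction e with
      | _ u v => exact ((hGpadj u v).1 (Gp.mem_edgeSet.1 he)).2
    -- an injection from components to ℕ
    obtain ⟨g, hg⟩ := exists_injective_nat (Gp.ConnectedComponent)
    set f : V → ℕ := fun v => g (Gp.connectedComponentMk v) with hfdef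
    have hfiff : ∀ u v, f u = f v ↔ Gp.Reachable u v := by
      intro u v
      rw [hfdef]
      simp only
      rw [← SimpleGraph.ConnectedComponent.eq]
      exact ⟨fun h' => hg h', fun h' => by rw [h']⟩
    have hcost : clusterCost G Y f = 0 := by
      rw [clusterCost_eq_zero_iff]
      intro u v huv
      constructor
      · intro h1
        exact (hfiff u v).2 ((hGpadj u v).2 ⟨huv, h1⟩).reachable
      · intro hm hfuv
        -- bad cycle construction
        have hreach : Gp.Reachable u v := (hfiff u v).1 hfuv
        obtain ⟨w⟩ := hreach
        let p := w.toPath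
        have hptrans : ∀ e ∈ (p : Gp.Walk u v).edges, e ∈ G.edgeSet := fun e he =>
          (SimpleGraph.edgeSet_mono hGple) ((p : Gp.Walk u v).edges_subset_edgeSet he)
        let q : G.Walk u v := (p : Gp.Walk u v).transfer G hptrans
        have hqedges : q.edges = (p : Gp.Walk u v).edges :=
          SimpleGraph.Walk.edges_transfer _ hptrans
        have hqpos : ∀ e ∈ q.edges, Y e = 1 := by
          intro e he
          rw [hqedges] at he
          exact hGpedge e ((p : Gp.Walk u v).edges_subset_edgeSet he)
        have hnotmem : s(v, u) ∉ q.edges := by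
          intro hmem
          have := hqpos _ hmem
          rw [Sym2.eq_swap] at this
          rw [this] at hm
          norm_num at hm
        let c : G.Walk v v := SimpleGraph.Walk.cons huv.symm q
        have hcyc : c.IsCycle := by
          rw [SimpleGraph.Walk.cons_isCycle_iff]
          exact ⟨p.2.transfer hptrans, hnotmem⟩
        have hcount : c.edges.countP (fun e => decide (Y e = -1)) = 1 := by
          show (SimpleGraph.Walk.cons huv.symm q).edges.countP _ = 1
          rw [SimpleGraph.Walk.edges_cons, List.countP_cons]
          have h1 : q.edges.countP (fun e => decide (Y e = -1)) = 0 := by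
            rw [List.countP_eq_zero]
            intro e he
            simp [hqpos e he]
          have h2 : (decide (Y s(v, u) = -1)) = true := by
            rw [Sym2.eq_swap]; simp [hm]
          rw [h1, h2]
          simp
        exact h v c ⟨hcyc, hcount⟩
    rw [ccIndex, Nat.sInf_eq_zero]
    exact Or.inl ⟨f, hcost⟩
end

section
/- For any signed graph (G,Y), Δ(Y) equals the smallest number of edges that must be removed from G so that the remaining signed graph contains no bad cycle. -/
open scoped Classical

/-!
After deleting the edges on which a clustering `f` disagrees with the signs, the cluster
changes along an edge exactly when the edge is negative; so a cycle with a single negative edge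
would return to its start in a different cluster, and no bad cycle is left.

Conversely, if no bad cycle is left after deleting `F`, cluster the vertices by the connected
components of the remaining positive edges. A remaining negative edge inside a component would
close a bad cycle with a positive path joining its ends, and a remaining positive edge never
joins two components, so every disagreement edge of this clustering lies in `F`.
-/

lemma Nat.sInf_le_sInf_of_forall_exists_le {s t : Set ℕ} (h : ∀ b ∈ t, ∃ a ∈ s, a ≤ b)
    (ht : t.Nonempty) : sInf s ≤ sInf t := by
  obtain ⟨a, ha, hle⟩ := h _ (Nat.sInf_mem ht)
  exact (Nat.sInf_le ha).trans hle

lemma Nat.sInf_eq_of_forall_exists_le {s t : Set ℕ} (hst : ∀ a ∈ s, ∃ b ∈ t, b ≤ a)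
    (hts : ∀ b ∈ t, ∃ a ∈ s, a ≤ b) : sInf s = sInf t := by
  rcases t.eq_empty_or_nonempty with rfl | ht
  · have hs : s = ∅ := Set.eq_empty_of_forall_notMem fun a ha => by simpa using hst a ha
    rw [hs]
  · have hs : s.Nonempty := let ⟨a, ha, _⟩ := hts _ ht.some_mem; ⟨a, ha⟩
    exact le_antisymm (Nat.sInf_le_sInf_of_forall_exists_le hts ht)
      (Nat.sInf_le_sInf_of_forall_exists_le hst hs)

lemma SimpleGraph.exists_nat_eq_iff_reachable {V : Type*} [Countable V] (H : SimpleGraph V) :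
    ∃ f : V → ℕ, ∀ a b, f a = f b ↔ H.Reachable a b := by
  obtain ⟨g, hg⟩ := countable_iff_exists_injective H.ConnectedComponent |>.1
    (inferInstanceAs (Countable (Quot H.Reachable)))
  exact ⟨g ∘ H.connectedComponentMk, fun a b => hg.eq_iff.trans ConnectedComponent.eq⟩

open SimpleGraph

section SignedGraph

variable {V β : Type*} {G : SimpleGraph V} {Y : Sym2 V → ℤ}

def positivePart (G : SimpleGraph V) (Y : Sym2 V → ℤ) : SimpleGraph V :=
  G.deleteEdges {e | Y e ≠ 1}

lemma positivePart_adj {a b : V} :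
    (positivePart G Y).Adj a b ↔ G.Adj a b ∧ Y s(a, b) = 1 := by
  simp [positivePart]

lemma positivePart_le : positivePart G Y ≤ G :=
  deleteEdges_le _

lemma mem_edgeSet_positivePart {e : Sym2 V} :
    e ∈ (positivePart G Y).edgeSet ↔ e ∈ G.edgeSet ∧ Y e = 1 := by
  simp [positivePart, edgeSet_deleteEdges]

lemma eq_of_forall_mem_edges_ne {f : V → β}
    (hf : ∀ a b, G.Adj a b → (f a = f b ↔ Y s(a, b) ≠ -1)) {u v : V} (p : G.Walk u v)
    (hp : ∀ e ∈ p.edges, Y e ≠ -1) : f u = f v := by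
  induction p with
  | nil => rfl
  | cons h q ih =>
    rw [Walk.edges_cons, List.forall_mem_cons] at hp
    exact ((hf _ _ h).2 hp.1).trans (ih hp.2)

lemma ne_of_countP_edges_eq_one {f : V → β}
    (hf : ∀ a b, G.Adj a b → (f a = f b ↔ Y s(a, b) ≠ -1)) {u v : V} (p : G.Walk u v)
    (hp : p.edges.countP (fun e => decide (Y e = -1)) = 1) : f u ≠ f v := by
  induction p with
  | nil => simp at hp
  | cons h q ih =>
    rename_i a b c
    rw [Walk.edges_cons, List.countP_cons] at hp
    by_cases hneg : Y s(a, b) = -1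
    · have hq : ∀ e ∈ q.edges, Y e ≠ -1 := by
        simpa [hneg, List.countP_eq_zero] using hp
      rw [← eq_of_forall_mem_edges_ne hf q hq]
      exact fun hab => (hf a b h).1 hab hneg
    · rw [(hf a b h).2 hneg]
      exact ih (by simpa [hneg] using hp)

lemma not_isBadCycle_of_forall_adj {f : V → β}
    (hf : ∀ a b, G.Adj a b → (f a = f b ↔ Y s(a, b) ≠ -1)) {v : V} (c : G.Walk v v) :
    ¬ IsBadCycle G Y c :=
  fun hc => ne_of_countP_edges_eq_one hf c hc.2 rfl

lemma exists_isBadCycle_of_reachable_positivePart {a b : V} (hab : G.Adj a b)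
    (hneg : Y s(a, b) = -1) (hr : (positivePart G Y).Reachable a b) :
    ∃ c : G.Walk b b, IsBadCycle G Y c := by
  obtain ⟨p⟩ := hr
  have hq : ∀ e ∈ (p.bypass.mapLe positivePart_le).edges, Y e = 1 := by
    intro e he
    rw [Walk.edges_mapLe_eq_edges] at he
    exact (mem_edgeSet_positivePart.1 (p.bypass.edges_subset_edgeSet he)).2
  have hba : Y s(b, a) = -1 := by rwa [Sym2.eq_swap]
  refine ⟨.cons hab.symm _, (Walk.cons_isCycle_iff _ hab.symm).2
    ⟨p.bypass_isPath.mapLe _, fun he => by simpa [hba] using hq _ he⟩, ?_⟩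
  rw [Walk.edges_cons, List.countP_cons, List.countP_eq_zero.2 fun e he => by simp [hq e he]]
  simp [hba]

variable [Fintype V]

noncomputable def disagreementEdges (G : SimpleGraph V) (Y : Sym2 V → ℤ) (f : V → β) :
    Finset (Sym2 V) :=
  G.edgeFinset.filter fun e =>
    (Y e = -1 ∧ Sym2.lift ⟨fun u v => f u = f v, fun _ _ => propext eq_comm⟩ e) ∨
    (Y e = 1 ∧ ¬ Sym2.lift ⟨fun u v => f u = f v, fun _ _ => propext eq_comm⟩ e)

lemma clusterCost_eq_card_disagreementEdges (f : V → β) :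
    clusterCost G Y f = (disagreementEdges G Y f).card :=
  rfl

lemma mem_disagreementEdges {f : V → β} {a b : V} :
    s(a, b) ∈ disagreementEdges G Y f ↔
      G.Adj a b ∧ (Y s(a, b) = -1 ∧ f a = f b ∨ Y s(a, b) = 1 ∧ f a ≠ f b) := by
  simp [disagreementEdges]

lemma disagreementEdges_subset_edgeSet (f : V → β) :
    ↑(disagreementEdges G Y f) ⊆ G.edgeSet := by
  intro e he
  simp only [disagreementEdges, Finset.coe_filter] at he
  exact mem_edgeFinset.1 he.1

lemma forall_adj_deleteEdges_disagreementEdges (hY : ∀ e ∈ G.edgeSet, Y e = 1 ∨ Y e = -1)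
    (f : V → β) (a b : V) (hab : (G.deleteEdges ↑(disagreementEdges G Y f)).Adj a b) :
    f a = f b ↔ Y s(a, b) ≠ -1 := by
  rw [deleteEdges_adj, Finset.mem_coe, mem_disagreementEdges] at hab
  obtain ⟨hG, hagree⟩ := hab
  rcases hY s(a, b) hG with h | h <;> simp_all

lemma clusterCost_le_card_of_forall_not_isBadCycle (F : Finset (Sym2 V))
    (hF : ∀ (v : V) (c : (G.deleteEdges ↑F).Walk v v), ¬ IsBadCycle (G.deleteEdges ↑F) Y c)
    {f : V → β} (hf : ∀ a b, f a = f b ↔ (positivePart (G.deleteEdges ↑F) Y).Reachable a b) :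
    clusterCost G Y f ≤ F.card := by
  rw [clusterCost_eq_card_disagreementEdges]
  refine Finset.card_le_card fun e he => ?_
  induction e using Sym2.inductionOn with
  | hf a b =>
    obtain ⟨hG, hsign⟩ := mem_disagreementEdges.1 he
    by_contra hnF
    have hadj : (G.deleteEdges ↑F).Adj a b := (deleteEdges_adj ..).2 ⟨hG, hnF⟩
    rcases hsign with ⟨hneg, hsame⟩ | ⟨hpos, hdiff⟩
    · obtain ⟨c, hc⟩ := exists_isBadCycle_of_reachable_positivePart hadj hneg ((hf a b).1 hsame)
      exact hF b c hc
    · exact hdiff ((hf a b).2 (positivePart_adj.2 ⟨hadj, hpos⟩).reachable)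

end SignedGraph

/-- Δ(Y) is the smallest number of edges whose removal eliminates all bad cycles. -/
theorem stmt1 {V : Type*} [Fintype V] (G : SimpleGraph V) (Y : Sym2 V → ℤ)
    (hY : ∀ e ∈ G.edgeSet, Y e = 1 ∨ Y e = -1) :
    ccIndex G Y =
      sInf {k | ∃ F : Finset (Sym2 V), ↑F ⊆ G.edgeSet ∧ F.card = k ∧
        ∀ (v : V) (c : (G.deleteEdges ↑F).Walk v v),
          ¬ IsBadCycle (G.deleteEdges ↑F) Y c} := by
  apply Nat.sInf_eq_of_forall_exists_le
  · rintro _ ⟨f, rfl⟩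
    exact ⟨_, ⟨disagreementEdges G Y f, disagreementEdges_subset_edgeSet f, rfl,
      fun _ => not_isBadCycle_of_forall_adj (forall_adj_deleteEdges_disagreementEdges hY f)⟩,
      le_rfl⟩
  · rintro _ ⟨F, -, rfl, hF⟩
    obtain ⟨f, hf⟩ := (positivePart (G.deleteEdges ↑F) Y).exists_nat_eq_iff_reachable
    exact ⟨_, ⟨f, rfl⟩, clusterCost_le_card_of_forall_not_isBadCycle F hF hf⟩
end

section
/- The correlation clustering index Δ(Y) is lower bounded by the maximum number of pairwise edge-disjoint bad cycles in (G,Y), and upper bounded by the total number of bad cycles in (G,Y). -/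
open scoped Classical

/-- The edge sets of the bad cycles of `(G,Y)`. -/
noncomputable def badCycleSets {V : Type*} (G : SimpleGraph V) (Y : Sym2 V → ℤ) :
    Set (Finset (Sym2 V)) :=
  {s | ∃ (v : V) (c : G.Walk v v), IsBadCycle G Y c ∧ s = c.edges.toFinset}

/-!
Lower bound: along an edge that a clustering does not violate, the cluster changes exactly when
the edge is negative. A closed walk cannot change cluster exactly once, so every clustering
violates an edge of every bad cycle, and edge-disjoint bad cycles need distinct violated edges.

Upper bound: cluster by the connected components of the graph of non-negative edges. Then only
negative edges inside a component are violated, and such an edge closes a path of its component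
into a bad cycle, in which it is the only negative edge; so distinct violated edges lie on
distinct bad cycles.
-/

open Finset SimpleGraph

namespace CorrelationClustering

variable {V β : Type*}

def SameCluster (f : V → β) : Sym2 V → Prop :=
  Sym2.lift ⟨fun u v => f u = f v, fun _ _ => propext eq_comm⟩

@[simp]
lemma sameCluster_mk (f : V → β) (u v : V) : SameCluster f s(u, v) ↔ f u = f v := Iff.rfl

def IsViolated (Y : Sym2 V → ℤ) (f : V → β) (e : Sym2 V) : Prop :=
  (Y e = -1 ∧ SameCluster f e) ∨ (Y e = 1 ∧ ¬ SameCluster f e)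

lemma clusterCost_eq_card_filter [Fintype V] (G : SimpleGraph V) (Y : Sym2 V → ℤ) (f : V → β) :
    clusterCost G Y f = #{e ∈ G.edgeFinset | IsViolated Y f e} := by
  unfold clusterCost
  congr

lemma clusterCost_comp [Fintype V] {γ : Type*} (G : SimpleGraph V) (Y : Sym2 V → ℤ) (f : V → β)
    {ι : β → γ} (hι : ι.Injective) : clusterCost G Y (ι ∘ f) = clusterCost G Y f := by
  simp only [clusterCost_eq_card_filter]
  refine congrArg card (filter_congr fun e _ => ?_)
  induction e using Sym2.ind
  simp [IsViolated, hι.eq_iff]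

lemma ccIndex_le_clusterCost [Fintype V] [Countable β] (G : SimpleGraph V) (Y : Sym2 V → ℤ)
    (f : V → β) : ccIndex G Y ≤ clusterCost G Y f := by
  obtain ⟨ι, hι⟩ := Countable.exists_injective_nat β
  exact Nat.sInf_le ⟨ι ∘ f, clusterCost_comp G Y f hι⟩

lemma le_ccIndex [Fintype V] {G : SimpleGraph V} {Y : Sym2 V → ℤ} {n : ℕ}
    (h : ∀ f : V → ℕ, n ≤ clusterCost G Y f) : n ≤ ccIndex G Y :=
  le_csInf ⟨_, fun _ => 0, rfl⟩ (by rintro _ ⟨f, rfl⟩; exact h f)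

variable {G : SimpleGraph V}

lemma apply_eq_of_forall_sameCluster (f : V → β) {a b : V} (p : G.Walk a b)
    (hp : ∀ e ∈ p.edges, SameCluster f e) : f a = f b := by
  induction p with
  | nil => rfl
  | cons h q ih =>
    simp only [Walk.edges_cons, List.mem_cons, forall_eq_or_imp, sameCluster_mk] at hp
    exact hp.1.trans (ih hp.2)

lemma apply_ne_of_countP_crossing_eq_one (f : V → β) {a b : V} (p : G.Walk a b)
    (hp : p.edges.countP (fun e => ¬ SameCluster f e) = 1) : f a ≠ f b := by
  induction p with
  | nil => simp at hp
  | @cons a c b h q ih =>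
    rw [Walk.edges_cons, List.countP_cons] at hp
    by_cases hac : f a = f c
    · simp only [sameCluster_mk, hac, not_true_eq_false, decide_false] at hp
      rw [hac]
      exact ih (by simpa using hp)
    · simp only [sameCluster_mk, hac, not_false_eq_true, decide_true] at hp
      have hq : ∀ e ∈ q.edges, SameCluster f e := by
        simpa [List.countP_eq_zero] using hp
      rwa [← apply_eq_of_forall_sameCluster f q hq]

lemma exists_isViolated_of_countP_neg_eq_one {Y : Sym2 V → ℤ}
    (hY : ∀ e ∈ G.edgeSet, Y e = 1 ∨ Y e = -1) (f : V → β) {v : V} (c : G.Walk v v)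
    (hc : c.edges.countP (fun e => Y e = -1) = 1) : ∃ e ∈ c.edges, IsViolated Y f e := by
  by_contra! hnv
  have hcrossing : ∀ e ∈ c.edges, Y e = -1 ↔ ¬ SameCluster f e := by
    intro e he
    rcases hY e (c.edges_subset_edgeSet he) with hpos | hneg <;>
      simp_all [IsViolated]
  refine apply_ne_of_countP_crossing_eq_one f c ?_ rfl
  rwa [← List.countP_congr (p := fun e => Y e = -1) fun e he => by simpa using hcrossing e he]

lemma card_le_clusterCost [Fintype V] {Y : Sym2 V → ℤ}
    (hY : ∀ e ∈ G.edgeSet, Y e = 1 ∨ Y e = -1) (D : Finset (Finset (Sym2 V)))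
    (hD : ↑D ⊆ badCycleSets G Y) (hdisj : ∀ s ∈ D, ∀ t ∈ D, s ≠ t → Disjoint s t)
    (f : V → β) : #D ≤ clusterCost G Y f := by
  rw [clusterCost_eq_card_filter]
  refine card_le_card_of_forall_subsingleton (fun s e => e ∈ s) (fun s hs => ?_) ?_
  · obtain ⟨v, c, ⟨-, hc⟩, rfl⟩ := hD hs
    obtain ⟨e, he, hviol⟩ := exists_isViolated_of_countP_neg_eq_one hY f c hc
    exact ⟨e, mem_filter.2 ⟨mem_edgeFinset.2 (c.edges_subset_edgeSet he), hviol⟩,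
      List.mem_toFinset.2 he⟩
  · rintro e - s ⟨hs, hes⟩ t ⟨ht, het⟩
    by_contra hst
    exact disjoint_left.1 (hdisj s hs t ht hst) hes het

lemma subsingleton_neg_of_mem_badCycleSets {Y : Sym2 V → ℤ} {s : Finset (Sym2 V)}
    (hs : s ∈ badCycleSets G Y) : {e | e ∈ s ∧ Y e = -1}.Subsingleton := by
  obtain ⟨v, c, ⟨-, hc⟩, rfl⟩ := hs
  obtain ⟨e₀, he₀⟩ := List.length_eq_one_iff.1 (List.countP_eq_length_filter ▸ hc)
  have hmem : ∀ e ∈ c.edges, Y e = -1 → e = e₀ := fun e he hneg => by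
    have : e ∈ c.edges.filter (fun e => Y e = -1) := List.mem_filter.2 ⟨he, by simpa using hneg⟩
    simpa [he₀] using this
  rintro e ⟨he, hneg⟩ e' ⟨he', hneg'⟩
  rw [List.mem_toFinset] at he he'
  rw [hmem e he hneg, hmem e' he' hneg']

lemma exists_mem_badCycleSets_of_reachable {Y : Sym2 V → ℤ} {u v : V} (huv : G.Adj u v)
    (hneg : Y s(u, v) = -1) (hreach : (G.deleteEdges {e | Y e = -1}).Reachable v u) :
    ∃ s ∈ badCycleSets G Y, s(u, v) ∈ s := by
  obtain ⟨p⟩ := hreach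
  let q : G.Walk v u := p.toPath.1.mapLe (G.deleteEdges_le _)
  have hq : ∀ e ∈ q.edges, Y e ≠ -1 := fun e he => by
    rw [Walk.edges_mapLe_eq_edges] at he
    have hdel := p.toPath.1.edges_subset_edgeSet he
    rw [edgeSet_deleteEdges] at hdel
    exact hdel.2
  have hcycle : (Walk.cons huv q).IsCycle :=
    (Walk.cons_isCycle_iff q huv).2 ⟨p.toPath.2.mapLe _, fun h => hq _ h hneg⟩
  have hcount : (Walk.cons huv q).edges.countP (fun e => Y e = -1) = 1 := by
    rw [Walk.edges_cons, List.countP_cons, List.countP_eq_zero.2 (by simpa using hq)]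
    simp [hneg]
  exact ⟨_, ⟨u, _, ⟨hcycle, hcount⟩, rfl⟩, by simp⟩

lemma exists_mem_badCycleSets_of_isViolated {Y : Sym2 V → ℤ} {e : Sym2 V} (he : e ∈ G.edgeSet)
    (hviol : IsViolated Y (G.deleteEdges {e | Y e = -1}).connectedComponentMk e) :
    Y e = -1 ∧ ∃ s ∈ badCycleSets G Y, e ∈ s := by
  induction e using Sym2.ind with
  | _ u v =>
    rcases hviol with ⟨hneg, hsame⟩ | ⟨hpos, hcross⟩
    · refine ⟨hneg, exists_mem_badCycleSets_of_reachable he hneg ?_⟩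
      exact (ConnectedComponent.eq.1 (by simpa using hsame)).symm
    · refine absurd ?_ hcross
      have hadj : (G.deleteEdges {e | Y e = -1}).Adj u v := by simpa [hpos] using he
      simpa using ConnectedComponent.eq.2 hadj.reachable

lemma clusterCost_connectedComponentMk_le [Fintype V] (G : SimpleGraph V) (Y : Sym2 V → ℤ) :
    clusterCost G Y (G.deleteEdges {e | Y e = -1}).connectedComponentMk ≤
      (badCycleSets G Y).ncard := by
  rw [clusterCost_eq_card_filter, Set.ncard_eq_toFinset_card']
  refine card_le_card_of_forall_subsingleton (fun e s => e ∈ s ∧ Y e = -1) (fun e he => ?_)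
    fun s hs => ?_
  · rw [mem_filter, mem_edgeFinset] at he
    obtain ⟨hneg, s, hs, hes⟩ := exists_mem_badCycleSets_of_isViolated he.1 he.2
    exact ⟨s, Set.mem_toFinset.2 hs, hes, hneg⟩
  · exact (subsingleton_neg_of_mem_badCycleSets (Set.mem_toFinset.1 hs)).anti
      fun e he => he.2

end CorrelationClustering

/-- Δ(Y) is at least the maximum number of pairwise edge-disjoint bad cycles and
at most the total number of bad cycles. -/
theorem stmt2 {V : Type*} [Fintype V] (G : SimpleGraph V) (Y : Sym2 V → ℤ)
    (hY : ∀ e ∈ G.edgeSet, Y e = 1 ∨ Y e = -1) :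
    (∀ D : Finset (Finset (Sym2 V)), ↑D ⊆ badCycleSets G Y →
      (∀ s ∈ D, ∀ t ∈ D, s ≠ t → Disjoint s t) → D.card ≤ ccIndex G Y) ∧
    ccIndex G Y ≤ (badCycleSets G Y).ncard :=
  ⟨fun D hD hdisj => CorrelationClustering.le_ccIndex fun f =>
      CorrelationClustering.card_le_clusterCost hY D hD hdisj f,
    (CorrelationClustering.ccIndex_le_clusterCost G Y _).trans
      (CorrelationClustering.clusterCost_connectedComponentMk_le G Y)⟩
end

section
/- Let G = (V,E) be a complete graph and let K be any integer with 0 ≤ K ≤ (|V|−3)(|V|−4)/6. Then there exists an edge labeling Y : E → {−1,+1} with Δ(Y) = K. -/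
/-!
In a finite abelian group of order `n`, the zero-sum `3`-subsets `{x, y, -(x + y)}` form a
partial Steiner triple system (two points determine the third), and there are at least
`(n² - 3n) / 6` of them. Transport such a system to `V`, keep `K` of its triples, make one edge
of each kept triple negative and every other edge positive. The kept triples are then pairwise
edge-disjoint bad triangles, so every clustering errs on at least `K` edges, while the
one-cluster clustering errs exactly on the `K` negative edges.
-/

open scoped Classical

open Finset

structure IsPartialSteinerTripleSystem {V : Type*} (S : Finset (Finset V)) : Prop where
  card_eq_three : ∀ t ∈ S, #t = 3
  card_inter_le_one : (S : Set (Finset V)).Pairwise fun t t' => #(t ∩ t') ≤ 1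

namespace IsPartialSteinerTripleSystem
variable {V : Type*} {S T : Finset (Finset V)}

lemma mono (hT : IsPartialSteinerTripleSystem T) (hST : S ⊆ T) :
    IsPartialSteinerTripleSystem S :=
  ⟨fun t ht => hT.card_eq_three t (hST ht), hT.card_inter_le_one.mono (coe_subset.mpr hST)⟩

lemma eq_of_mem_sym2 (hS : IsPartialSteinerTripleSystem S) {t t' : Finset V} (ht : t ∈ S)
    (ht' : t' ∈ S) {e : Sym2 V} (he : e ∈ t.sym2) (he' : e ∈ t'.sym2) (hd : ¬e.IsDiag) :
    t = t' := by
  by_contra hne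
  induction e using Sym2.ind with
  | _ x y =>
    rw [mk_mem_sym2_iff] at he he'
    have hxy : x ≠ y := by simpa using hd
    have hle := hS.card_inter_le_one ht ht' hne
    have hlt : 1 < #(t ∩ t') := one_lt_card.mpr
      ⟨x, mem_inter.mpr ⟨he.1, he'.1⟩, y, mem_inter.mpr ⟨he.2, he'.2⟩, hxy⟩
    omega

lemma card_le_card_of_forall_exists_mem_sym2 (hS : IsPartialSteinerTripleSystem S)
    {E : Finset (Sym2 V)} (h : ∀ t ∈ S, ∃ e ∈ E, e ∈ t.sym2 ∧ ¬e.IsDiag) : #S ≤ #E := by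
  refine card_le_card_of_forall_subsingleton (fun t e => e ∈ t.sym2 ∧ ¬e.IsDiag) h ?_
  rintro e - t ⟨ht, he, hd⟩ t' ⟨ht', he', -⟩
  exact hS.eq_of_mem_sym2 ht ht' he he' hd

lemma exists_finset_sym2_meets_each_in_one_edge (hS : IsPartialSteinerTripleSystem S) :
    ∃ N : Finset (Sym2 V), #N ≤ #S ∧ ∀ t ∈ S, ∃ a b c, t = {a, b, c} ∧ a ≠ b ∧ a ≠ c ∧ b ≠ c ∧
      s(a, b) ∈ N ∧ s(a, c) ∉ N ∧ s(b, c) ∉ N := by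
  rcases isEmpty_or_nonempty V with _ | _
  · refine ⟨∅, by simp, fun t ht => absurd (hS.card_eq_three t ht) ?_⟩
    simp [eq_empty_of_isEmpty t]
  choose! a b c hab hac hbc hst using fun t ht => Finset.card_eq_three.mp (hS.card_eq_three t ht)
  have mem : ∀ t ∈ S, a t ∈ t ∧ b t ∈ t ∧ c t ∈ t := fun t ht => by
    have h := Finset.ext_iff.mp (hst t ht)
    simp [h]
  set N := S.image fun t => s(a t, b t)
  have only_one : ∀ t ∈ S, ∀ u ∈ t, ∀ v ∈ t, s(u, v) ∈ N → s(u, v) = s(a t, b t) := by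
    intro t ht u hu v hv huv
    obtain ⟨t', ht', he⟩ := mem_image.mp huv
    have hd : ¬(s(a t', b t')).IsDiag := by simpa using hab t' ht'
    rw [← hS.eq_of_mem_sym2 ht' ht (mk_mem_sym2_iff.mpr ⟨(mem t' ht').1, (mem t' ht').2.1⟩)
      (he ▸ mk_mem_sym2_iff.mpr ⟨hu, hv⟩) hd, he]
  refine ⟨N, card_image_le, fun t ht => ⟨a t, b t, c t, hst t ht, hab t ht, hac t ht, hbc t ht,
    mem_image_of_mem _ ht, fun h => ?_, fun h => ?_⟩⟩
  · have := only_one t ht (a t) (mem t ht).1 (c t) (mem t ht).2.2 h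
    exact hbc t ht (Sym2.congr_right.mp this).symm
  · have := only_one t ht (b t) (mem t ht).2.1 (c t) (mem t ht).2.2 h
    exact hac t ht (Sym2.congr_right.mp (this.trans Sym2.eq_swap)).symm

end IsPartialSteinerTripleSystem

section ZeroSumTriples
variable {W : Type*} [AddCommGroup W]

lemma eq_insert_neg_add_of_sum_eq_zero {t : Finset W} (h3 : #t = 3) (h0 : ∑ x ∈ t, x = 0)
    {x y : W} (hx : x ∈ t) (hy : y ∈ t) (hxy : x ≠ y) : t = {x, y, -(x + y)} := by
  have hy' : y ∈ t.erase x := mem_erase.mpr ⟨hxy.symm, hy⟩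
  obtain ⟨z, hz⟩ : ∃ z, (t.erase x).erase y = {z} := by
    rw [← card_eq_one, card_erase_of_mem hy', card_erase_of_mem hx, h3]
  have hsum : x + y + z = 0 := by
    rw [← h0, ← insert_erase hx, sum_insert (notMem_erase x t), ← insert_erase hy',
      sum_insert (notMem_erase y _), hz, sum_singleton, add_assoc]
  rw [← insert_erase hx, ← insert_erase hy', hz, eq_neg_of_add_eq_zero_right hsum]

variable (W) [Fintype W]

noncomputable def zeroSumTriples : Finset (Finset W) := {t | #t = 3 ∧ ∑ x ∈ t, x = 0}

variable {W}

lemma mem_zeroSumTriples {t : Finset W} : t ∈ zeroSumTriples W ↔ #t = 3 ∧ ∑ x ∈ t, x = 0 := by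
  simp [zeroSumTriples]

lemma insert_neg_add_mem_zeroSumTriples {x y : W} (hxy : x ≠ y) (hx : -(x + y) ≠ x)
    (hy : -(x + y) ≠ y) : {x, y, -(x + y)} ∈ zeroSumTriples W := by
  have hx' : x ∉ ({y, -(x + y)} : Finset W) := by
    simp only [mem_insert, mem_singleton, not_or]; exact ⟨hxy, hx.symm⟩
  have hy' : y ∉ ({-(x + y)} : Finset W) := by simpa using hy.symm
  refine mem_zeroSumTriples.mpr ⟨?_, ?_⟩
  · rw [card_insert_of_notMem hx', card_insert_of_notMem hy', card_singleton]
  · rw [sum_insert hx', sum_insert hy', sum_singleton]; abel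

lemma isPartialSteinerTripleSystem_zeroSumTriples :
    IsPartialSteinerTripleSystem (zeroSumTriples W) := by
  refine ⟨fun t ht => (mem_zeroSumTriples.mp ht).1, fun t ht t' ht' hne => ?_⟩
  by_contra! h
  obtain ⟨x, hx, y, hy, hxy⟩ := one_lt_card.mp h
  rw [mem_inter] at hx hy
  obtain ⟨h3, h0⟩ := mem_zeroSumTriples.mp ht
  obtain ⟨h3', h0'⟩ := mem_zeroSumTriples.mp ht'
  exact hne <| (eq_insert_neg_add_of_sum_eq_zero h3 h0 hx.1 hy.1 hxy).trans
    (eq_insert_neg_add_of_sum_eq_zero h3' h0' hx.2 hy.2 hxy).symm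

/-- An ordered pair `(x, y)` lies in the zero-sum triple `{x, y, -(x + y)}` unless `y = x`,
`y = -(x + x)` or `x = -(y + y)`; each triple contains six ordered pairs. -/
lemma card_mul_card_le_six_mul_card_zeroSumTriples :
    Fintype.card W * Fintype.card W ≤ 6 * #(zeroSumTriples W) + 3 * Fintype.card W := by
  set good : Finset (W × W) := {p | p.1 ≠ p.2 ∧ -(p.1 + p.2) ≠ p.1 ∧ -(p.1 + p.2) ≠ p.2}
  have hgood : #good ≤ 6 * #(zeroSumTriples W) := by
    have hcover : good ⊆ (zeroSumTriples W).biUnion offDiag := by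
      rintro ⟨x, y⟩ hp
      obtain ⟨hxy, hx, hy⟩ := (mem_filter.mp hp).2
      exact mem_biUnion.mpr ⟨_, insert_neg_add_mem_zeroSumTriples hxy hx hy, by simp [hxy]⟩
    calc #good ≤ #((zeroSumTriples W).biUnion offDiag) := card_le_card hcover
      _ ≤ ∑ t ∈ zeroSumTriples W, #t.offDiag := card_biUnion_le
      _ = 6 * #(zeroSumTriples W) := by
        rw [sum_congr rfl fun t ht => by rw [offDiag_card, (mem_zeroSumTriples.mp ht).1],
          sum_const, smul_eq_mul, mul_comm]
  have hbad : #goodᶜ ≤ 3 * Fintype.card W := by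
    have hcover : goodᶜ ⊆ (univ.image fun x => (x, x)) ∪ (univ.image fun x => (x, -(x + x))) ∪
        (univ.image fun y => (-(y + y), y)) := by
      rintro ⟨x, y⟩ hp
      simp only [good, compl_filter, mem_filter, mem_univ, true_and, not_and_or, not_not] at hp
      simp only [mem_union, mem_image, mem_univ, true_and, Prod.mk.injEq]
      rcases hp with rfl | h | h
      · exact Or.inl (Or.inl ⟨x, rfl, rfl⟩)
      all_goals rw [neg_eq_iff_add_eq_zero] at h
      · exact Or.inl (Or.inr ⟨x, rfl, (eq_neg_of_add_eq_zero_left (by rw [← h]; abel)).symm⟩)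
      · exact Or.inr ⟨y, (eq_neg_of_add_eq_zero_left (by rw [← h]; abel)).symm, rfl⟩
    grw [card_le_card hcover, card_union_le, card_union_le, card_image_le, card_image_le,
      card_image_le, card_univ]
    omega
  rw [card_compl, Fintype.card_prod] at hbad
  omega

end ZeroSumTriples

theorem exists_large_isPartialSteinerTripleSystem (V : Type*) [Fintype V] :
    ∃ S : Finset (Finset V), IsPartialSteinerTripleSystem S ∧
      Fintype.card V * Fintype.card V ≤ 6 * #S + 3 * Fintype.card V := by
  rcases isEmpty_or_nonempty V with _ | _
  · exact ⟨∅, ⟨by simp, by simp⟩, by simp⟩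
  have : NeZero (Fintype.card V) := ⟨Fintype.card_ne_zero⟩
  let : AddCommGroup V :=
    (Fintype.equivOfCardEq (ZMod.card _).symm : V ≃ ZMod (Fintype.card V)).addCommGroup
  exact ⟨zeroSumTriples V, isPartialSteinerTripleSystem_zeroSumTriples,
    card_mul_card_le_six_mul_card_zeroSumTriples⟩

section Clustering
variable {V : Type*} [Fintype V] (G : SimpleGraph V) (Y : Sym2 V → ℤ)

lemma ccIndex_le_clusterCost (f : V → ℕ) : ccIndex G Y ≤ clusterCost G Y f :=
  Nat.sInf_le ⟨f, rfl⟩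

lemma le_ccIndex {k : ℕ} (h : ∀ f : V → ℕ, k ≤ clusterCost G Y f) : k ≤ ccIndex G Y := by
  obtain ⟨f, hf⟩ := Nat.sInf_mem (s := {c | ∃ f : V → ℕ, clusterCost G Y f = c}) ⟨_, 0, rfl⟩
  rw [ccIndex, ← hf]
  exact h f

lemma clusterCost_const {β : Type*} (c : β) :
    clusterCost G Y (fun _ : V => c) = #{e ∈ G.edgeFinset | Y e = -1} := by
  refine congrArg card (filter_congr fun e _ => ?_)
  induction e using Sym2.ind with
  | _ u v => simp

lemma ccIndex_ite_mem_le (N : Finset (Sym2 V)) :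
    ccIndex G (fun e => if e ∈ N then -1 else 1) ≤ #N := by
  refine (ccIndex_le_clusterCost _ _ fun _ => 0).trans ?_
  rw [clusterCost_const]
  exact card_le_card fun e he => by_contra fun hN => by simp [hN] at he

/-- A triangle with one negative and two positive edges is a bad triangle: no clustering agrees
with all three of its edges. -/
lemma card_le_clusterCost {S : Finset (Finset V)} (hS : IsPartialSteinerTripleSystem S)
    (hbad : ∀ t ∈ S, ∃ a b c, t = {a, b, c} ∧ G.Adj a b ∧ G.Adj a c ∧ G.Adj b c ∧
      Y s(a, b) = -1 ∧ Y s(a, c) = 1 ∧ Y s(b, c) = 1)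
    {β : Type*} (f : V → β) : #S ≤ clusterCost G Y f := by
  refine hS.card_le_card_of_forall_exists_mem_sym2 fun t ht => ?_
  suffices ∃ u ∈ t, ∃ v ∈ t, G.Adj u v ∧
      ((Y s(u, v) = -1 ∧ f u = f v) ∨ (Y s(u, v) = 1 ∧ f u ≠ f v)) by
    obtain ⟨u, hu, v, hv, huv, h⟩ := this
    exact ⟨s(u, v), by simpa [huv] using h, mk_mem_sym2_iff.mpr ⟨hu, hv⟩, by simpa using huv.ne⟩
  obtain ⟨a, b, c, rfl, hab, hac, hbc, h₁, h₂, h₃⟩ := hbad t ht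
  by_cases hfac : f a = f c
  · by_cases hfbc : f b = f c
    · exact ⟨a, by simp, b, by simp, hab, Or.inl ⟨h₁, hfac.trans hfbc.symm⟩⟩
    · exact ⟨b, by simp, c, by simp, hbc, Or.inr ⟨h₃, hfbc⟩⟩
  · exact ⟨a, by simp, c, by simp, hac, Or.inr ⟨h₂, hfac⟩⟩

end Clustering

theorem exists_ccIndex_top_eq_card {V : Type*} [Fintype V] {S : Finset (Finset V)}
    (hS : IsPartialSteinerTripleSystem S) :
    ∃ Y : Sym2 V → ℤ, (∀ e, Y e = 1 ∨ Y e = -1) ∧ ccIndex (⊤ : SimpleGraph V) Y = #S := by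
  obtain ⟨N, hNS, hN⟩ := hS.exists_finset_sym2_meets_each_in_one_edge
  refine ⟨fun e => if e ∈ N then -1 else 1, fun e => by dsimp only; split_ifs <;> simp,
    le_antisymm ((ccIndex_ite_mem_le _ N).trans hNS) (le_ccIndex _ _ fun f => ?_)⟩
  refine card_le_clusterCost _ _ hS (fun t ht => ?_) f
  obtain ⟨a, b, c, rfl, hab, hac, hbc, h₁, h₂, h₃⟩ := hN t ht
  exact ⟨a, b, c, rfl, hab, hac, hbc, by simp [h₁], by simp [h₂], by simp [h₃]⟩

/-- On the complete graph, every value `K ≤ (|V|-3)(|V|-4)/6` is achieved as Δ(Y)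
for some ±1 edge labeling. -/
theorem stmt3 {V : Type*} [Fintype V] (K : ℕ)
    (hK : K ≤ (Fintype.card V - 3) * (Fintype.card V - 4) / 6) :
    ∃ Y : Sym2 V → ℤ, (∀ e, Y e = 1 ∨ Y e = -1) ∧
      ccIndex (⊤ : SimpleGraph V) Y = K := by
  obtain ⟨T, hT, hTcard⟩ := exists_large_isPartialSteinerTripleSystem V
  have hKT : K ≤ #T := by
    have h6 : 6 * K ≤ (Fintype.card V - 3) * (Fintype.card V - 4) := by omega
    rcases le_or_gt (Fintype.card V) 3 with hn | hn
    · simp only [Nat.sub_eq_zero_of_le hn, zero_mul] at h6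
      omega
    · obtain ⟨m, hm⟩ : ∃ m, Fintype.card V = m + 4 := ⟨Fintype.card V - 4, by omega⟩
      rw [hm] at h6 hTcard
      simp only [show m + 4 - 3 = m + 1 by omega, Nat.add_sub_cancel] at h6
      nlinarith
  obtain ⟨S, hST, rfl⟩ := exists_subset_card_eq hKT
  exact exists_ccIndex_top_eq_card (hT.mono hST)
end

section
/- The edge set of the complete graph on n vertices can be decomposed into pairwise edge-disjoint triangles if and only if n ≡ 1 or 3 (mod 6). -/
/-!
Necessity is double counting: in a triangle decomposition of `K_n` every vertex lies on
`(n - 1) / 2` triangles, so `n` is odd, and there are `n (n - 1) / 6` triangles, so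
`3 ∣ n (n - 1) / 2`.

For sufficiency, a Steiner quasigroup on the vertices (idempotent, commutative, and
`x ∘ (x ∘ y) = y`) yields a triangle decomposition whose triangle through `x ≠ y` is
`{x, y, x ∘ y}`. For `n = 6k + 3`, Bose's construction gives one on `ZMod (2k + 1) × ZMod 3`
from the idempotent commutative quasigroup `x ∘ y = (x + y) / 2`; for `n = 6k + 1`, Skolem's
construction adds a point at infinity to `ZMod (2k) × ZMod 3` and uses a commutative quasigroup
`x ∘ y = π (x + y)` on `ZMod (2k)` that is idempotent on half of its elements.
-/

open Finset

namespace SimpleGraph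

variable {V : Type*} [DecidableEq V]

structure IsTriangleDecomposition (G : SimpleGraph V) (P : Finset (Finset (Sym2 V))) : Prop where
  exists_eq_triangle : ∀ t ∈ P, ∃ a b c, G.Adj a b ∧ G.Adj a c ∧ G.Adj b c ∧
    t = {s(a, b), s(a, c), s(b, c)}
  existsUnique_mem : ∀ e ∈ G.edgeSet, ∃! t, t ∈ P ∧ e ∈ t

theorem isTriangleDecomposition_top_iff [Fintype (⊤ : SimpleGraph V).edgeSet]
    {P : Finset (Finset (Sym2 V))} :
    (⊤ : SimpleGraph V).IsTriangleDecomposition P ↔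
      (∀ t ∈ P, ∃ a b c : V, a ≠ b ∧ a ≠ c ∧ b ≠ c ∧
        t = {s(a, b), s(a, c), s(b, c)}) ∧
      ∀ e ∈ (⊤ : SimpleGraph V).edgeFinset, ∃! t, t ∈ P ∧ e ∈ t := by
  simp only [mem_edgeFinset]
  exact ⟨fun h => ⟨h.1, h.2⟩, fun h => ⟨h.1, h.2⟩⟩

theorem card_filter_mem_triangle_even {a b c : V} (hab : a ≠ b) (hac : a ≠ c) (hbc : b ≠ c)
    (v : V) : Even #(({s(a, b), s(a, c), s(b, c)} : Finset (Sym2 V)).filter (v ∈ ·)) := by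
  by_cases hva : v = a <;> by_cases hvb : v = b <;> by_cases hvc : v = c <;>
    simp_all [filter_insert, filter_singleton]

theorem card_triangle {a b c : V} (hab : a ≠ b) (hac : a ≠ c) (hbc : b ≠ c) :
    #({s(a, b), s(a, c), s(b, c)} : Finset (Sym2 V)) = 3 := by
  rw [card_eq_three]
  exact ⟨_, _, _, by simp [*], by simp [*], by simp [*], rfl⟩

namespace IsTriangleDecomposition

variable {G : SimpleGraph V} {P : Finset (Finset (Sym2 V))}

theorem subset_edgeSet (hP : G.IsTriangleDecomposition P) {t : Finset (Sym2 V)} (ht : t ∈ P) :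
    ↑t ⊆ G.edgeSet := by
  obtain ⟨a, b, c, hab, hac, hbc, rfl⟩ := hP.exists_eq_triangle t ht
  simp [Set.insert_subset_iff, hab, hac, hbc]

theorem pairwiseDisjoint (hP : G.IsTriangleDecomposition P) :
    (P : Set (Finset (Sym2 V))).PairwiseDisjoint id := by
  intro t ht u hu hne
  refine Finset.disjoint_left.2 fun e (het : e ∈ t) (heu : e ∈ u) => hne ?_
  obtain ⟨_, -, huniq⟩ := hP.existsUnique_mem e (hP.subset_edgeSet ht het)
  exact (huniq t ⟨ht, het⟩).trans (huniq u ⟨hu, heu⟩).symm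

theorem biUnion_eq_edgeFinset [Fintype G.edgeSet] (hP : G.IsTriangleDecomposition P) :
    P.biUnion id = G.edgeFinset := by
  ext e
  simp only [mem_biUnion, id, mem_edgeFinset]
  refine ⟨fun ⟨t, ht, het⟩ => hP.subset_edgeSet ht het, fun he => ?_⟩
  obtain ⟨t, ⟨ht, het⟩, -⟩ := hP.existsUnique_mem e he
  exact ⟨t, ht, het⟩

theorem card_edgeFinset [Fintype G.edgeSet] (hP : G.IsTriangleDecomposition P) :
    #G.edgeFinset = 3 * #P := by
  rw [← hP.biUnion_eq_edgeFinset, card_biUnion hP.pairwiseDisjoint, mul_comm,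
    ← smul_eq_mul, ← sum_const]
  refine sum_congr rfl fun t ht => ?_
  obtain ⟨a, b, c, hab, hac, hbc, rfl⟩ := hP.exists_eq_triangle t ht
  exact card_triangle hab.ne hac.ne hbc.ne

theorem even_degree [Fintype V] [DecidableRel G.Adj] (hP : G.IsTriangleDecomposition P) (v : V) :
    Even (G.degree v) := by
  rw [← card_incidenceFinset_eq_degree, incidenceFinset_eq_filter, ← hP.biUnion_eq_edgeFinset,
    filter_biUnion, card_biUnion fun t ht u hu hne =>
      disjoint_filter_filter (hP.pairwiseDisjoint ht hu hne)]
  refine even_sum _ fun t ht => ?_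
  obtain ⟨a, b, c, hab, hac, hbc, rfl⟩ := hP.exists_eq_triangle t ht
  exact card_filter_mem_triangle_even hab.ne hac.ne hbc.ne v

end IsTriangleDecomposition

end SimpleGraph

theorem Nat.mod_six_eq_one_or_three {n : ℕ} (hn : Odd n) (h : 3 ∣ n.choose 2) :
    n % 6 = 1 ∨ n % 6 = 3 := by
  obtain ⟨m, rfl⟩ := hn
  have hchoose : (2 * m + 1).choose 2 = (2 * m + 1) * m := by
    rw [Nat.choose_two_right, Nat.add_sub_cancel, mul_left_comm, Nat.mul_div_cancel_left _ two_pos]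
  rw [hchoose] at h
  rcases (Nat.prime_three.dvd_mul).1 h with h | h <;> omega

theorem SimpleGraph.IsTriangleDecomposition.card_mod_six {V : Type*} [Fintype V]
    [DecidableEq V] [Nonempty V] {P : Finset (Finset (Sym2 V))}
    (hP : (⊤ : SimpleGraph V).IsTriangleDecomposition P) :
    Fintype.card V % 6 = 1 ∨ Fintype.card V % 6 = 3 := by
  have hpos := Fintype.card_pos (α := V)
  apply Nat.mod_six_eq_one_or_three
  · have hdeg := hP.even_degree (Classical.arbitrary V)
    rw [IsRegularOfDegree.top] at hdeg
    obtain ⟨m, hm⟩ := hdeg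
    exact ⟨m, by omega⟩
  · rw [← card_edgeFinset_top_eq_card_choose_two, hP.card_edgeFinset]
    exact dvd_mul_right 3 _

structure IsSteinerQuasigroup {V : Type*} (op : V → V → V) : Prop where
  idem : ∀ x, op x x = x
  comm : ∀ x y, op x y = op y x
  op_op : ∀ x y, op x (op x y) = y

namespace IsSteinerQuasigroup

variable {V : Type*} {op : V → V → V}

theorem op_ne_left (h : IsSteinerQuasigroup op) {x y : V} (hxy : x ≠ y) : op x y ≠ x := by
  intro hx
  have := h.op_op x y
  rw [hx, h.idem] at this
  exact hxy this

theorem op_ne_right (h : IsSteinerQuasigroup op) {x y : V} (hxy : x ≠ y) : op x y ≠ y := by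
  rw [h.comm]
  exact h.op_ne_left hxy.symm

theorem comap {W : Type*} (h : IsSteinerQuasigroup op) (e : W ≃ V) :
    IsSteinerQuasigroup fun x y => e.symm (op (e x) (e y)) where
  idem x := by simp [h.idem]
  comm x y := by rw [h.comm]
  op_op x y := by simp [h.op_op]

variable [DecidableEq V]

def block (op : V → V → V) (x y : V) : Finset V := {x, y, op x y}

theorem block_comm (h : IsSteinerQuasigroup op) (x y : V) : block op x y = block op y x := by
  rw [block, block, h.comm, insert_comm]

theorem block_op_right (h : IsSteinerQuasigroup op) (x y : V) :
    block op x (op x y) = block op x y := by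
  rw [block, block, h.op_op, pair_comm]

theorem block_eq_of_mem (h : IsSteinerQuasigroup op) {a b x y : V} (hxy : x ≠ y)
    (hx : x ∈ block op a b) (hy : y ∈ block op a b) : block op x y = block op a b := by
  have hba : block op b (op a b) = block op a b := by
    rw [h.comm a b, h.block_op_right, h.block_comm]
  simp only [block, mem_insert, mem_singleton] at hx hy
  rcases hx with rfl | rfl | rfl <;> rcases hy with rfl | rfl | rfl <;> first
    | exact absurd rfl hxy
    | rfl
    | exact h.block_comm _ _
    | exact h.block_op_right _ _
    | exact hba
    | exact (h.block_comm _ _).trans (h.block_op_right _ _)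
    | exact (h.block_comm _ _).trans hba

end IsSteinerQuasigroup

section edgesOn

variable {V : Type*} [DecidableEq V]

def edgesOn (s : Finset V) : Finset (Sym2 V) := s.sym2.filter (¬ ·.IsDiag)

theorem mk_mem_edgesOn {s : Finset V} {x y : V} (hxy : x ≠ y) :
    s(x, y) ∈ edgesOn s ↔ x ∈ s ∧ y ∈ s := by
  simp [edgesOn, hxy]

theorem edgesOn_triple {a b c : V} (hab : a ≠ b) (hac : a ≠ c) (hbc : b ≠ c) :
    edgesOn {a, b, c} = {s(a, b), s(a, c), s(b, c)} := by
  ext e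
  induction e with
  | _ x y =>
    simp only [edgesOn, mem_filter, Finset.mk_mem_sym2_iff, Sym2.mk_isDiag_iff, mem_insert,
      mem_singleton, Sym2.eq_iff]
    aesop

end edgesOn

theorem IsSteinerQuasigroup.isTriangleDecomposition_top {V : Type*} [Fintype V] [DecidableEq V]
    {op : V → V → V} (h : IsSteinerQuasigroup op) :
    (⊤ : SimpleGraph V).IsTriangleDecomposition
      (univ.offDiag.image fun p => edgesOn (block op p.1 p.2)) where
  exists_eq_triangle t ht := by
    simp only [mem_image, mem_offDiag, mem_univ, true_and] at ht
    obtain ⟨⟨a, b⟩, hab, rfl⟩ := ht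
    exact ⟨a, b, op a b, hab, (h.op_ne_left hab).symm, (h.op_ne_right hab).symm,
      edgesOn_triple hab (h.op_ne_left hab).symm (h.op_ne_right hab).symm⟩
  existsUnique_mem e he := by
    induction e with
    | _ x y =>
      have hxy : x ≠ y := by simpa using he
      refine ⟨edgesOn (block op x y), ⟨mem_image.2 ⟨(x, y), by simpa using hxy, rfl⟩,
        (mk_mem_edgesOn hxy).2 (by simp [block])⟩, ?_⟩
      rintro t ⟨ht, hxyt⟩
      simp only [mem_image, mem_offDiag, mem_univ, true_and] at ht
      obtain ⟨⟨a, b⟩, -, rfl⟩ := ht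
      obtain ⟨hx, hy⟩ := (mk_mem_edgesOn hxy).1 hxyt
      rw [h.block_eq_of_mem hxy hx hy]

namespace ZMod

theorem three_cases (i j : ZMod 3) : j = i ∨ j = i + 1 ∨ i = j + 1 := by decide +revert

theorem three_add_one_ne (i : ZMod 3) : i + 1 ≠ i := by decide +revert

theorem three_add_one_add_one_ne (i : ZMod 3) : i + 1 + 1 ≠ i := by decide +revert

theorem three_sub_one_eq_add_one_add_one (i : ZMod 3) : i - 1 = i + 1 + 1 := by decide +revert

theorem three_sub_one_sub_one (i : ZMod 3) : i - 1 - 1 = i + 1 := by decide +revert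

end ZMod

namespace Bose

variable {G : Type*} [AddCommGroup G] [DecidableEq G] (π : G ≃ G)

def opNext (x y : G) (i : ZMod 3) : G × ZMod 3 := if x = y then (x, i - 1) else (y + y - x, i)

/-- The blocks are `{(x, 0), (x, 1), (x, 2)}` and `{(x, i), (y, i), (π (x + y), i + 1)}` for
`x ≠ y`; `op p q` is the third point of the block through `p` and `q`. -/
def op : G × ZMod 3 → G × ZMod 3 → G × ZMod 3
  | (x, i), (y, j) =>
    if i = j then (if x = y then (x, i) else (π (x + y), i + 1))
    else if j = i + 1 then opNext x y i else opNext y x j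

variable {π}

theorem op_idem (p : G × ZMod 3) : op π p p = p := by
  simp [op]

theorem op_same_level {x y : G} (i : ZMod 3) (hxy : x ≠ y) :
    op π (x, i) (y, i) = (π (x + y), i + 1) := by
  simp [op, hxy]

theorem op_of_eq_add_one {x y : G} {i j : ZMod 3} (h : j = i + 1) :
    op π (x, i) (y, j) = opNext x y i := by
  subst h
  simp [op, (ZMod.three_add_one_ne i).symm]

theorem op_of_add_one_eq {x y : G} {i j : ZMod 3} (h : i = j + 1) :
    op π (x, i) (y, j) = opNext y x j := by
  subst h
  simp [op, ZMod.three_add_one_ne j, (ZMod.three_add_one_add_one_ne j).symm]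

omit [DecidableEq G] in
theorem half_add_half (hπ : ∀ x, π (x + x) = x) (z : G) : π z + π z = z :=
  π.injective (by rw [hπ])

theorem op_comm (p q : G × ZMod 3) : op π p q = op π q p := by
  obtain ⟨x, i⟩ := p
  obtain ⟨y, j⟩ := q
  rcases ZMod.three_cases i j with rfl | h | h
  · by_cases hxy : x = y
    · rw [hxy]
    · rw [op_same_level _ hxy, op_same_level _ (Ne.symm hxy), add_comm]
  · rw [op_of_eq_add_one h, op_of_add_one_eq h]
  · rw [op_of_eq_add_one h, op_of_add_one_eq h]

theorem isSteinerQuasigroup (hπ : ∀ x, π (x + x) = x) : IsSteinerQuasigroup (op π) where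
  idem := op_idem
  comm := op_comm
  op_op := by
    rintro ⟨x, i⟩ ⟨y, j⟩
    rcases ZMod.three_cases i j with rfl | rfl | rfl
    · by_cases hxy : x = y
      · rw [hxy, op_idem, op_idem]
      · have hx : x ≠ π (x + y) := fun hx => by
          have := half_add_half hπ (x + y)
          rw [← hx] at this
          exact hxy (add_left_cancel this)
        rw [op_same_level _ hxy, op_of_eq_add_one rfl, opNext, if_neg hx, half_add_half hπ,
          add_sub_cancel_left]
    · rw [op_of_eq_add_one rfl, opNext]
      by_cases hxy : x = y
      · rw [if_pos hxy, op_of_add_one_eq (sub_add_cancel i 1).symm, opNext, if_pos rfl, hxy,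
          ZMod.three_sub_one_sub_one]
      · have hx : x ≠ y + y - x := fun hx => hxy <| by
          rw [← hπ x, ← hπ y, ← eq_sub_iff_add_eq.1 hx]
        rw [if_neg hxy, op_same_level _ hx, add_sub_cancel, hπ]
    · rw [op_of_add_one_eq rfl, opNext]
      obtain rfl | hyx := eq_or_ne y x
      · rw [if_pos rfl, op_of_eq_add_one (ZMod.three_sub_one_eq_add_one_add_one _), opNext,
          if_pos rfl, add_sub_cancel_right]
      · have hx : x + x - y ≠ x := fun hx => hyx (add_left_cancel (sub_eq_iff_eq_add.1 hx)).symm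
        rw [if_neg hyx, op_of_add_one_eq rfl, opNext, if_neg hx, sub_sub_cancel]

end Bose

namespace Skolem

variable {G : Type*} [AddCommGroup G]

/-- `x ∘ y = π (x + y)` is a commutative quasigroup in which exactly the elements of `L` are
idempotent, and `x ↦ x ∘ x` maps the complement of `L` bijectively onto `L`, with inverse
`x ↦ x + κ`. -/
structure IsHalving (π : G ≃ G) (L : Set G) (κ : G) : Prop where
  sq_of_mem : ∀ x ∈ L, π (x + x) = x
  sq_mem_of_notMem : ∀ x ∉ L, π (x + x) ∈ L
  sq_add_of_notMem : ∀ x ∉ L, π (x + x) + κ = x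
  add_notMem : ∀ x ∈ L, x + κ ∉ L

theorem IsHalving.sq_add_of_mem {π : G ≃ G} {L : Set G} {κ : G} (h : IsHalving π L κ) {y : G}
    (hy : y ∈ L) : π ((y + κ) + (y + κ)) = y :=
  add_right_cancel (h.sq_add_of_notMem _ (h.add_notMem y hy))

variable [DecidableEq G] (π : G ≃ G) (L : Set G) [DecidablePred (· ∈ L)] (κ : G)

def opInf (y : G) (j : ZMod 3) : Option (G × ZMod 3) :=
  if y ∈ L then some (y + κ, j - 1) else some (π (y + y), j + 1)

def opNext (x y : G) (i : ZMod 3) : Option (G × ZMod 3) :=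
  if y = π (x + x) then (if x ∈ L then some (x, i - 1) else none) else some (π.symm y - x, i)

/-- With `none` as the point at infinity, the blocks are `{(x, 0), (x, 1), (x, 2)}` for `x ∈ L`,
`{none, (x, i), (π (x + x), i + 1)}` for `x ∉ L`, and `{(x, i), (y, i), (π (x + y), i + 1)}` for
`x ≠ y`. -/
def op : Option (G × ZMod 3) → Option (G × ZMod 3) → Option (G × ZMod 3)
  | none, none => none
  | none, some (y, j) => opInf π L κ y j
  | some (x, i), none => opInf π L κ x i
  | some (x, i), some (y, j) =>
    if i = j then (if x = y then some (x, i) else some (π (x + y), i + 1))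
    else if j = i + 1 then opNext π L x y i else opNext π L y x j

variable {π L κ}

theorem op_idem (p : Option (G × ZMod 3)) : op π L κ p p = p := by
  rcases p with _ | ⟨x, i⟩ <;> simp [op]

theorem op_same_level {x y : G} (i : ZMod 3) (hxy : x ≠ y) :
    op π L κ (some (x, i)) (some (y, i)) = some (π (x + y), i + 1) := by
  simp [op, hxy]

theorem op_of_eq_add_one {x y : G} {i j : ZMod 3} (h : j = i + 1) :
    op π L κ (some (x, i)) (some (y, j)) = opNext π L x y i := by
  subst h
  simp [op, (ZMod.three_add_one_ne i).symm]

theorem op_of_add_one_eq {x y : G} {i j : ZMod 3} (h : i = j + 1) :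
    op π L κ (some (x, i)) (some (y, j)) = opNext π L y x j := by
  subst h
  simp [op, ZMod.three_add_one_ne j, (ZMod.three_add_one_add_one_ne j).symm]

theorem op_comm (p q : Option (G × ZMod 3)) : op π L κ p q = op π L κ q p := by
  rcases p with _ | ⟨x, i⟩ <;> rcases q with _ | ⟨y, j⟩
  · rfl
  · rfl
  · rfl
  rcases ZMod.three_cases i j with rfl | h | h
  · by_cases hxy : x = y
    · rw [hxy]
    · rw [op_same_level _ hxy, op_same_level _ (Ne.symm hxy), add_comm]
  · rw [op_of_eq_add_one h, op_of_add_one_eq h]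
  · rw [op_of_eq_add_one h, op_of_add_one_eq h]

theorem op_op_same_level {x y : G} (i : ZMod 3) (hxy : x ≠ y) :
    op π L κ (some (x, i)) (op π L κ (some (x, i)) (some (y, i))) = some (y, i) := by
  have hx : π (x + y) ≠ π (x + x) := fun hx => hxy (add_left_cancel (π.injective hx)).symm
  rw [op_same_level _ hxy, op_of_eq_add_one rfl, opNext, if_neg hx, π.symm_apply_apply,
    add_sub_cancel_left]

namespace IsHalving

variable (h : IsHalving π L κ)
include h

theorem op_none_op_none (y : G) (j : ZMod 3) :
    op π L κ none (op π L κ none (some (y, j))) = some (y, j) := by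
  by_cases hy : y ∈ L
  · simp only [op, opInf, if_pos hy, if_neg (h.add_notMem y hy), h.sq_add_of_mem hy,
      sub_add_cancel]
  · simp only [op, opInf, if_neg hy, if_pos (h.sq_mem_of_notMem y hy), h.sq_add_of_notMem y hy,
      add_sub_cancel_right]

theorem op_op_none (x : G) (i : ZMod 3) :
    op π L κ (some (x, i)) (op π L κ (some (x, i)) none) = none := by
  by_cases hx : x ∈ L
  · rw [op, opInf, if_pos hx, op_of_add_one_eq (sub_add_cancel i 1).symm, opNext,
      if_pos (h.sq_add_of_mem hx).symm, if_neg (h.add_notMem x hx)]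
  · rw [op, opInf, if_neg hx, op_of_eq_add_one rfl, opNext, if_pos rfl, if_neg hx]

theorem op_op_next (x y : G) (i : ZMod 3) :
    op π L κ (some (x, i)) (op π L κ (some (x, i)) (some (y, i + 1))) = some (y, i + 1) := by
  rw [op_of_eq_add_one rfl, opNext]
  by_cases hy : y = π (x + x)
  · rw [if_pos hy]
    by_cases hx : x ∈ L
    · rw [if_pos hx, op_of_add_one_eq (sub_add_cancel i 1).symm, opNext,
        if_pos (h.sq_of_mem x hx).symm, if_pos hx, ZMod.three_sub_one_sub_one, hy,
        h.sq_of_mem x hx]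
    · rw [if_neg hx, op, opInf, if_neg hx, hy]
  · have hz : x ≠ π.symm y - x := fun hz =>
      hy (by rw [← sub_eq_iff_eq_add.1 hz.symm, π.apply_symm_apply])
    rw [if_neg hy, op_same_level _ hz, add_sub_cancel, π.apply_symm_apply]

theorem op_op_prev (x y : G) (j : ZMod 3) :
    op π L κ (some (x, j + 1)) (op π L κ (some (x, j + 1)) (some (y, j))) = some (y, j) := by
  rw [op_of_add_one_eq rfl, opNext]
  by_cases hx : x = π (y + y)
  · rw [if_pos hx]
    by_cases hy : y ∈ L
    · rw [if_pos hy, op_of_eq_add_one (ZMod.three_sub_one_eq_add_one_add_one _), opNext, hx,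
        h.sq_of_mem y hy, if_pos (h.sq_of_mem y hy).symm, if_pos hy, add_sub_cancel_right]
    · rw [if_neg hy, op, opInf, if_pos (hx ▸ h.sq_mem_of_notMem y hy), add_sub_cancel_right, hx,
        h.sq_add_of_notMem y hy]
  · have hyz : y + (π.symm x - y) = π.symm x := add_sub_cancel y _
    have hzx : x ≠ π ((π.symm x - y) + (π.symm x - y)) := fun hzx => hx <| by
      have hyz' : y = π.symm x - y :=
        add_right_cancel (π.injective (by rw [hyz, π.apply_symm_apply, ← hzx]))
      rw [← π.apply_symm_apply x, ← hyz, ← hyz']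
    rw [if_neg hx, op_of_add_one_eq rfl, opNext, if_neg hzx, sub_sub_cancel]

theorem isSteinerQuasigroup : IsSteinerQuasigroup (op π L κ) where
  idem := op_idem
  comm := op_comm
  op_op := by
    rintro (_ | ⟨x, i⟩) (_ | ⟨y, j⟩)
    · rfl
    · exact h.op_none_op_none y j
    · exact h.op_op_none x i
    rcases ZMod.three_cases i j with rfl | rfl | rfl
    · obtain rfl | hxy := eq_or_ne x y
      · rw [op_idem, op_idem]
      · exact op_op_same_level _ hxy
    · exact h.op_op_next x y i
    · exact h.op_op_prev x y j

end IsHalving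

end Skolem

theorem ZMod.two_mul_add_one_self (k : ℕ) : (2 * k + 1 : ZMod (2 * k + 1)) = 0 := by
  exact_mod_cast ZMod.natCast_self (2 * k + 1)

def ZMod.halving (k : ℕ) : ZMod (2 * k + 1) ≃ ZMod (2 * k + 1) where
  toFun x := (k + 1) * x
  invFun x := x + x
  left_inv x := by linear_combination x * ZMod.two_mul_add_one_self k
  right_inv x := by linear_combination x * ZMod.two_mul_add_one_self k

theorem ZMod.halving_add_self (k : ℕ) (x : ZMod (2 * k + 1)) : ZMod.halving k (x + x) = x :=
  (ZMod.halving k).right_inv x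

section skolemHalving

variable (k : ℕ) [NeZero k]

def ZMod.skolemHalvingFun (z : ZMod (2 * k)) : ZMod (2 * k) :=
  if z.val % 2 = 0 then ((z.val / 2 : ℕ) : ZMod (2 * k))
  else ((z.val / 2 + k : ℕ) : ZMod (2 * k))

variable {k}

theorem ZMod.val_skolemHalvingFun (z : ZMod (2 * k)) :
    (skolemHalvingFun k z).val = if z.val % 2 = 0 then z.val / 2 else z.val / 2 + k := by
  have := z.val_lt
  unfold skolemHalvingFun
  split_ifs <;> exact ZMod.val_natCast_of_lt (by omega)

theorem ZMod.skolemHalvingFun_injective : Function.Injective (skolemHalvingFun k) := by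
  intro z w h
  have hz := z.val_lt
  have hw := w.val_lt
  have := congrArg ZMod.val h
  rw [val_skolemHalvingFun, val_skolemHalvingFun] at this
  apply ZMod.val_injective
  split_ifs at this <;> omega

variable (k) in
noncomputable def ZMod.skolemHalving : ZMod (2 * k) ≃ ZMod (2 * k) :=
  Equiv.ofBijective _ (Finite.injective_iff_bijective.1 skolemHalvingFun_injective)

theorem ZMod.val_skolemHalving_add_self_of_lt {x : ZMod (2 * k)} (hx : x.val < k) :
    (skolemHalving k (x + x)).val = x.val := by
  rw [skolemHalving, Equiv.ofBijective_apply, val_skolemHalvingFun, val_add_of_lt (by omega)]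
  split_ifs <;> omega

theorem ZMod.val_skolemHalving_add_self_of_le {x : ZMod (2 * k)} (hx : k ≤ x.val) :
    (skolemHalving k (x + x)).val = x.val - k := by
  have := x.val_lt
  rw [skolemHalving, Equiv.ofBijective_apply, val_skolemHalvingFun, val_add_of_le (by omega)]
  split_ifs <;> omega

theorem ZMod.val_natCast_self_two_mul : ((k : ℕ) : ZMod (2 * k)).val = k :=
  ZMod.val_natCast_of_lt (by have := NeZero.pos k; omega)

theorem ZMod.isHalving_skolemHalving :
    Skolem.IsHalving (skolemHalving k) {x | x.val < k} (k : ZMod (2 * k)) where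
  sq_of_mem x hx := ZMod.val_injective _ (val_skolemHalving_add_self_of_lt hx)
  sq_mem_of_notMem x (hx : ¬x.val < k) := by
    have := x.val_lt
    show (skolemHalving k (x + x)).val < k
    rw [val_skolemHalving_add_self_of_le (not_lt.1 hx)]
    omega
  sq_add_of_notMem x (hx : ¬x.val < k) := by
    have := x.val_lt
    have hsq := val_skolemHalving_add_self_of_le (not_lt.1 hx)
    apply ZMod.val_injective
    rw [val_add_of_lt (by rw [hsq, val_natCast_self_two_mul]; omega), hsq,
      val_natCast_self_two_mul]
    omega
  add_notMem x (hx : x.val < k) := by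
    show ¬(x + k).val < k
    rw [val_add_of_lt (by rw [val_natCast_self_two_mul]; omega), val_natCast_self_two_mul]
    omega

end skolemHalving

theorem exists_isSteinerQuasigroup {V : Type*} [Fintype V]
    (hV : Fintype.card V % 6 = 1 ∨ Fintype.card V % 6 = 3) :
    ∃ op : V → V → V, IsSteinerQuasigroup op := by
  suffices ∃ (W : Type) (_ : Fintype W) (_ : DecidableEq W) (op : W → W → W),
      Fintype.card W = Fintype.card V ∧ IsSteinerQuasigroup op by
    obtain ⟨W, _, _, op, hcard, hop⟩ := this
    exact ⟨_, hop.comap (Fintype.equivOfCardEq hcard.symm)⟩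
  rcases hV with hV | hV
  · obtain ⟨k, hk⟩ : ∃ k, Fintype.card V = 6 * k + 1 :=
      ⟨Fintype.card V / 6, by omega⟩
    rcases Nat.eq_zero_or_pos k with rfl | hk0
    · exact ⟨Unit, inferInstance, inferInstance, fun x _ => x, by simp [hk],
        ⟨fun _ => rfl, fun _ _ => rfl, fun _ _ => rfl⟩⟩
    · have : NeZero k := ⟨hk0.ne'⟩
      refine ⟨Option (ZMod (2 * k) × ZMod 3), inferInstance, inferInstance, _, ?_,
        (ZMod.isHalving_skolemHalving (k := k)).isSteinerQuasigroup⟩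
      simp only [Fintype.card_option, Fintype.card_prod, ZMod.card, hk]
      ring
  · obtain ⟨k, hk⟩ : ∃ k, Fintype.card V = 6 * k + 3 :=
      ⟨Fintype.card V / 6, by omega⟩
    refine ⟨ZMod (2 * k + 1) × ZMod 3, inferInstance, inferInstance, _, ?_,
      Bose.isSteinerQuasigroup (ZMod.halving_add_self k)⟩
    simp only [Fintype.card_prod, ZMod.card, hk]
    ring

/-- Steiner triple systems: the complete graph on `n ≥ 1` vertices decomposes into
pairwise edge-disjoint triangles iff `n ≡ 1` or `3 (mod 6)`. -/
theorem stmt4 (n : ℕ) (hn : 1 ≤ n) :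
    (∃ P : Finset (Finset (Sym2 (Fin n))),
      (∀ t ∈ P, ∃ a b c : Fin n, a ≠ b ∧ a ≠ c ∧ b ≠ c ∧
        t = {s(a, b), s(a, c), s(b, c)}) ∧
      (∀ e ∈ (⊤ : SimpleGraph (Fin n)).edgeFinset, ∃! t, t ∈ P ∧ e ∈ t)) ↔
    (n % 6 = 1 ∨ n % 6 = 3) := by
  simp_rw [← SimpleGraph.isTriangleDecomposition_top_iff]
  constructor
  · rintro ⟨P, hP⟩
    have : Nonempty (Fin n) := ⟨⟨0, hn⟩⟩
    simpa using hP.card_mod_six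
  · intro h
    obtain ⟨op, hop⟩ := exists_isSteinerQuasigroup (V := Fin n) (by simpa using h)
    exact ⟨_, hop.isTriangleDecomposition_top⟩
end

section
/- For a signed graph (G,Y) with G connected, Δ₂(Y) = 0 if and only if the signed Laplacian L_s = D − Y is singular (has determinant zero). -/
open scoped Classical
open Matrix

/-- Two-cluster correlation clustering index Δ₂(Y). -/
noncomputable def ccIndex2 {V : Type*} [Fintype V] (G : SimpleGraph V) (Y : Sym2 V → ℤ) : ℕ :=
  sInf {c | ∃ f : V → Bool, clusterCost G Y f = c}

/-- Equality case for a sum bounded termwise in absolute value. -/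
lemma sum_eq_card_mul_forces {α : Type*} (s : Finset α) (t : α → ℝ) (c : ℝ)
    (hb : ∀ j ∈ s, |t j| ≤ |c|) (hs : ∑ j ∈ s, t j = s.card * c) :
    ∀ j ∈ s, t j = c := by
  rcases le_or_gt 0 c with hc | hc
  · have h0 : ∑ j ∈ s, (c - t j) = 0 := by
      rw [Finset.sum_sub_distrib, Finset.sum_const, nsmul_eq_mul, hs, sub_self]
    have hnn : ∀ j ∈ s, 0 ≤ c - t j := by
      intro j hj
      have := (abs_le.mp (hb j hj)).2
      rw [abs_of_nonneg hc] at this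
      linarith
    intro j hj
    have := (Finset.sum_eq_zero_iff_of_nonneg hnn).mp h0 j hj
    linarith
  · have h0 : ∑ j ∈ s, (t j - c) = 0 := by
      rw [Finset.sum_sub_distrib, Finset.sum_const, nsmul_eq_mul, hs, sub_self]
    have hnn : ∀ j ∈ s, 0 ≤ t j - c := by
      intro j hj
      have := (abs_le.mp (hb j hj)).1
      rw [abs_of_neg hc] at this
      linarith
    intro j hj
    have := (Finset.sum_eq_zero_iff_of_nonneg hnn).mp h0 j hj
    linarith

/-- For a connected signed graph, Δ₂(Y) = 0 iff the signed Laplacian is singular. -/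
theorem stmt8 (n : ℕ) (G : SimpleGraph (Fin n)) [DecidableRel G.Adj] (hG : G.Connected)
    (Y : Sym2 (Fin n) → ℤ) (hY : ∀ e ∈ G.edgeSet, Y e = 1 ∨ Y e = -1)
    (A : Matrix (Fin n) (Fin n) ℝ)
    (hA : ∀ i j, A i j = if G.Adj i j then ((Y s(i, j) : ℤ) : ℝ) else 0)
    (L : Matrix (Fin n) (Fin n) ℝ)
    (hLdef : L = Matrix.diagonal (fun i => (G.degree i : ℝ)) - A) :
    ccIndex2 G Y = 0 ↔ L.det = 0 := by
  have hne : Nonempty (Fin n) := hG.nonempty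
  -- formula for L.mulVec
  have hmul : ∀ x : Fin n → ℝ, ∀ i, L.mulVec x i =
      (G.degree i : ℝ) * x i - ∑ j ∈ G.neighborFinset i, ((Y s(i, j) : ℤ) : ℝ) * x j := by
    intro x i
    have hAx : A.mulVec x i = ∑ j ∈ G.neighborFinset i, ((Y s(i, j) : ℤ) : ℝ) * x j := by
      rw [Matrix.mulVec, dotProduct]
      rw [SimpleGraph.neighborFinset_eq_filter, Finset.sum_filter]
      apply Finset.sum_congr rfl
      intro j _
      rw [hA]
      split <;> simp
    rw [hLdef, Matrix.sub_mulVec, Pi.sub_apply, Matrix.mulVec_diagonal, hAx]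
  have hYabs : ∀ i j, G.Adj i j → |((Y s(i, j) : ℤ) : ℝ)| = 1 := by
    intro i j hij
    rcases hY s(i, j) ((SimpleGraph.mem_edgeSet G).mpr hij) with h | h <;> rw [h] <;> norm_num
  constructor
  · -- Δ₂ = 0 → det = 0
    intro h0
    have hnonempty : {c | ∃ f : Fin n → Bool, clusterCost G Y f = c}.Nonempty :=
      ⟨clusterCost G Y (fun _ => true), fun _ => true, rfl⟩
    have hmem : (0 : ℕ) ∈ {c | ∃ f : Fin n → Bool, clusterCost G Y f = c} := by
      have := Nat.sInf_mem hnonempty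
      rwa [show sInf {c | ∃ f : Fin n → Bool, clusterCost G Y f = c} = ccIndex2 G Y from rfl,
        h0] at this
    obtain ⟨f, hf⟩ := hmem
    -- the filter is empty
    have hempty : ∀ e ∈ G.edgeSet,
        ¬ ((Y e = -1 ∧ Sym2.lift ⟨fun u v => f u = f v, fun _ _ => propext eq_comm⟩ e) ∨
          (Y e = 1 ∧ ¬ Sym2.lift ⟨fun u v => f u = f v, fun _ _ => propext eq_comm⟩ e)) := by
      unfold clusterCost at hf
      rw [Finset.card_eq_zero, Finset.eq_empty_iff_forall_notMem] at hf
      intro e he hcond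
      apply hf e
      simp only [Finset.mem_filter, SimpleGraph.mem_edgeFinset]
      exact ⟨he, hcond⟩
    set x : Fin n → ℝ := fun i => if f i then 1 else -1 with hxdef
    have hxval : ∀ i, x i = if f i then 1 else -1 := fun _ => rfl
    have hedge : ∀ i j, G.Adj i j → ((Y s(i, j) : ℤ) : ℝ) * x j = x i := by
      intro i j hij
      have hnc := hempty _ ((SimpleGraph.mem_edgeSet G).mpr hij)
      push_neg at hnc
      rcases hY s(i, j) ((SimpleGraph.mem_edgeSet G).mpr hij) with h1 | h1
      · have hfij : f i = f j := by simpa using hnc.2 h1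
        rw [h1, hxval i, hxval j, hfij]
        push_cast
        ring
      · have hfij : ¬ f i = f j := by simpa using hnc.1 h1
        rw [h1, hxval i, hxval j]
        cases hfi : f i <;> cases hfj : f j <;> simp_all
    have hLx : L.mulVec x = 0 := by
      funext i
      rw [hmul x i, Pi.zero_apply]
      have hsum : ∑ j ∈ G.neighborFinset i, ((Y s(i, j) : ℤ) : ℝ) * x j
          = ∑ j ∈ G.neighborFinset i, x i := by
        apply Finset.sum_congr rfl
        intro j hj
        exact hedge i j ((SimpleGraph.mem_neighborFinset G i j).mp hj)
      rw [hsum, Finset.sum_const, SimpleGraph.card_neighborFinset_eq_degree, nsmul_eq_mul,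
        sub_self]
    have hx0 : x ≠ 0 := by
      obtain ⟨i0⟩ := hne
      intro hcon
      have h1 : x i0 = 0 := congrFun hcon i0
      rw [hxval i0] at h1
      by_cases hf0 : f i0 <;> simp [hf0] at h1
    exact (Matrix.exists_mulVec_eq_zero_iff).mp ⟨x, hx0, hLx⟩
  · -- det = 0 → Δ₂ = 0
    intro hdet
    obtain ⟨x, hx0, hLx⟩ := (Matrix.exists_mulVec_eq_zero_iff).mpr hdet
    have huniv : (Finset.univ : Finset (Fin n)).Nonempty := Finset.univ_nonempty
    set M : ℝ := Finset.univ.sup' huniv (fun i => |x i|) with hMdef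
    have hle : ∀ i, |x i| ≤ M := by
      intro i
      rw [hMdef]
      exact Finset.le_sup' (fun i => |x i|) (Finset.mem_univ i)
    obtain ⟨i0, _, hi0⟩ := Finset.exists_mem_eq_sup' huniv (fun i => |x i|)
    have hi0' : |x i0| = M := by rw [hMdef]; exact hi0.symm
    have hMpos : 0 < M := by
      rcases lt_or_ge 0 M with h | h
      · exact h
      · exfalso; apply hx0; funext i
        have h2 : |x i| ≤ 0 := le_trans (hle i) h
        have h3 : |x i| = 0 := le_antisymm h2 (abs_nonneg _)
        simpa using abs_eq_zero.mp h3
    -- vertex equations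
    have heq : ∀ i, ∑ j ∈ G.neighborFinset i, ((Y s(i, j) : ℤ) : ℝ) * x j
        = (G.degree i : ℝ) * x i := by
      intro i
      have := congrFun hLx i
      rw [hmul x i, Pi.zero_apply, sub_eq_zero] at this
      exact this.symm
    -- propagation claim
    have hclaim : ∀ i, |x i| = M → ∀ j, G.Adj i j →
        ((Y s(i, j) : ℤ) : ℝ) * x j = x i ∧ |x j| = M := by
      intro i hiM j hij
      have hbound : ∀ k ∈ G.neighborFinset i, |((Y s(i, k) : ℤ) : ℝ) * x k| ≤ |x i| := by
        intro k hk
        have hik := (SimpleGraph.mem_neighborFinset G i k).mp hk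
        rw [abs_mul, hYabs i k hik, one_mul, hiM]
        exact hle k
      have hsum : ∑ k ∈ G.neighborFinset i, ((Y s(i, k) : ℤ) : ℝ) * x k
          = (G.neighborFinset i).card * x i := by
        rw [heq i, SimpleGraph.card_neighborFinset_eq_degree]
      have hforce := sum_eq_card_mul_forces (G.neighborFinset i)
        (fun k => ((Y s(i, k) : ℤ) : ℝ) * x k) (x i) hbound hsum
      have hjmem : j ∈ G.neighborFinset i := (SimpleGraph.mem_neighborFinset G i j).mpr hij
      have h1 : ((Y s(i, j) : ℤ) : ℝ) * x j = x i := hforce j hjmem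
      refine ⟨h1, ?_⟩
      have : |((Y s(i, j) : ℤ) : ℝ) * x j| = |x i| := by rw [h1]
      rw [abs_mul, hYabs i j hij, one_mul, hiM] at this
      exact this
    -- all vertices have |x| = M via connectivity
    have hwalk : ∀ a b : Fin n, G.Walk a b → |x a| = M → |x b| = M := by
      intro a b w
      induction w with
      | nil => exact id
      | cons h p ih => intro ha; exact ih ((hclaim _ ha _ h).2)
    have hallM : ∀ j, |x j| = M := by
      intro j
      obtain ⟨w⟩ := hG.preconnected i0 j
      exact hwalk i0 j w hi0'
    have hedge : ∀ i j, G.Adj i j → ((Y s(i, j) : ℤ) : ℝ) * x j = x i :=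
      fun i j hij => (hclaim i (hallM i) j hij).1
    have hxne : ∀ i, x i ≠ 0 := by
      intro i hcon
      have := hallM i
      rw [hcon, abs_zero] at this
      exact absurd this.symm (ne_of_gt hMpos)
    -- define clustering by sign
    set f : Fin n → Bool := fun i => decide (0 < x i) with hfdef
    have hcost : clusterCost G Y f = 0 := by
      have hgood : ∀ e ∈ G.edgeSet,
          ¬ ((Y e = -1 ∧ Sym2.lift ⟨fun u v => f u = f v, fun _ _ => propext eq_comm⟩ e) ∨
            (Y e = 1 ∧ ¬ Sym2.lift ⟨fun u v => f u = f v, fun _ _ => propext eq_comm⟩ e)) := by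
        intro e he
        induction e using Sym2.ind with
        | _ i j =>
        have hij : G.Adj i j := (SimpleGraph.mem_edgeSet G).mp he
        have hxy := hedge i j hij
        rcases hY s(i, j) ((SimpleGraph.mem_edgeSet G).mpr hij) with h1 | h1
        · -- positive edge: x i = x j, same cluster
          have hx : x i = x j := by rw [h1] at hxy; simpa using hxy.symm
          have hff : f i = f j := by simp [hfdef, hx]
          rw [h1]
          simp [Sym2.lift_mk, hff]
        · -- negative edge: x i = -x j, different cluster
          have hx : x i = -x j := by rw [h1] at hxy; push_cast at hxy; linarith
          have hff : f i ≠ f j := by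
            simp only [hfdef, ne_eq, decide_eq_decide]
            intro hcon
            rcases lt_trichotomy 0 (x j) with h | h | h
            · have : 0 < x i := hcon.mpr h
              rw [hx] at this; linarith
            · exact hxne j h.symm
            · have hxi : 0 < x i := by rw [hx]; linarith
              have := hcon.mp hxi
              linarith
          rw [h1]
          simp [Sym2.lift_mk, hff]
      unfold clusterCost
      rw [Finset.card_eq_zero, Finset.eq_empty_iff_forall_notMem]
      intro e hmem
      simp only [Finset.mem_filter, SimpleGraph.mem_edgeFinset] at hmem
      exact hgood e hmem.1 hmem.2
    exact Nat.sInf_eq_zero.mpr (Or.inl ⟨f, hcost⟩)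
end

section
/- The Bell number B_n satisfies B_n < (n / ln(n+1))ⁿ for all n ≥ 1. -/
/-!
A partition of `Fin n` is determined by its equivalence relation, and an equivalence relation on
`Fin (n + 1)` is determined by the class `T` of the last point together with a relation on the
remaining `n - #T` points. Hence the partitions are counted by at most `Nat.bell`, which Mathlib
defines through the recursion `B (n + 1) = ∑ i ≤ n, C(n, i) B (n - i)`. The series
`∑ kⁿ / k!` obeys the same recursion, which gives Dobinski's formula `B n = e⁻¹ ∑ kⁿ / k!`.
Termwise, `kⁿ ≤ (n / t)ⁿ e^(t k - n)` (from `y ≤ e^(y - 1)`), so `∑ kⁿ / k! < (n / t)ⁿ e^(eᵗ - n)`;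
at `t = log (n + 1)` the right-hand side is `e (n / t)ⁿ`.
-/

noncomputable def bell (n : ℕ) : ℕ :=
  Nat.card (Finpartition (Finset.univ : Finset (Fin n)))

open Finset Real
open scoped Nat

namespace Setoid

instance finite {α : Type*} [Finite α] : Finite (Setoid α) :=
  Finite.of_injective (fun s : Setoid α => (s : α → α → Prop))
    fun _ _ h => Setoid.ext fun a b => iff_of_eq (congrFun (congrFun h a) b)

theorem ext_of_rel_iff_of_not_rel {α : Type*} {s t : Setoid α} (p : α)
    (hp : ∀ a, s a p ↔ t a p) (h : ∀ a b, ¬s a p → ¬s b p → (s a b ↔ t a b)) : s = t := by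
  refine ext fun a b => ?_
  by_cases ha : s a p <;> by_cases hb : s b p
  · exact iff_of_true (s.trans ha (s.symm hb)) (t.trans ((hp a).1 ha) (t.symm ((hp b).1 hb)))
  · exact iff_of_false (fun hab => hb (s.trans (s.symm hab) ha))
      (fun hab => hb ((hp b).2 (t.trans (t.symm hab) ((hp a).1 ha))))
  · exact iff_of_false (fun hab => ha (s.trans hab hb))
      (fun hab => ha ((hp a).2 (t.trans hab ((hp b).1 hb))))
  · exact h a b ha hb

variable {n : ℕ}

noncomputable def lastBlock (s : Setoid (Fin (n + 1))) : Finset (Fin n) := by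
  classical exact {x | s x.castSucc (Fin.last n)}

theorem mem_lastBlock {s : Setoid (Fin (n + 1))} {x : Fin n} :
    x ∈ s.lastBlock ↔ s x.castSucc (Fin.last n) := by
  classical simp [lastBlock]

theorem exists_castSucc_notMem_lastBlock {s : Setoid (Fin (n + 1))} {a : Fin (n + 1)}
    (ha : ¬s a (Fin.last n)) : ∃ x ∉ s.lastBlock, x.castSucc = a := by
  rcases a.eq_castSucc_or_eq_last with ⟨x, rfl⟩ | rfl
  · exact ⟨x, mem_lastBlock.not.2 ha, rfl⟩
  · exact absurd (s.refl _) ha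

theorem comap_castSucc_injOn (T : Finset (Fin n)) :
    Set.InjOn (fun s : Setoid (Fin (n + 1)) => s.comap fun x : {x // x ∉ T} => x.1.castSucc)
      {s | s.lastBlock = T} := by
  intro s hs t ht hst
  refine ext_of_rel_iff_of_not_rel (Fin.last n) (fun a => ?_) fun a b ha hb => ?_
  · rcases a.eq_castSucc_or_eq_last with ⟨x, rfl⟩ | rfl
    · rw [← mem_lastBlock, ← mem_lastBlock, Set.mem_ofPred.1 hs, Set.mem_ofPred.1 ht]
    · exact iff_of_true (s.refl _) (t.refl _)
  · obtain ⟨x, hx, rfl⟩ := exists_castSucc_notMem_lastBlock ha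
    obtain ⟨y, hy, rfl⟩ := exists_castSucc_notMem_lastBlock hb
    rw [Set.mem_ofPred.1 hs] at hx hy
    exact iff_of_eq (congrArg (fun r : Setoid {x // x ∉ T} => r ⟨x, hx⟩ ⟨y, hy⟩) hst)

theorem card_fiber_lastBlock_le (T : Finset (Fin n)) :
    Nat.card {s : Setoid (Fin (n + 1)) // s.lastBlock = T} ≤
      Nat.card (Setoid (Fin (n - #T))) := by
  classical
  let e : {x // x ∉ T} ≃ Fin (n - #T) := Fintype.equivFinOfCardEq (by simp)
  exact Nat.card_le_card_of_injective (fun s => (s.1.comap _).comap e.symm)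
    ((comap_injective _ e.symm.surjective).comp (comap_castSucc_injOn T).injective)

theorem card_fin_succ_le (n : ℕ) :
    Nat.card (Setoid (Fin (n + 1))) ≤ ∑ i ≤ n, n.choose i * Nat.card (Setoid (Fin (n - i))) :=
  calc Nat.card (Setoid (Fin (n + 1)))
      = ∑ T : Finset (Fin n), Nat.card {s : Setoid (Fin (n + 1)) // s.lastBlock = T} := by
        rw [← Nat.card_sigma, Nat.card_congr (Equiv.sigmaFiberEquiv lastBlock)]
    _ ≤ ∑ T : Finset (Fin n), Nat.card (Setoid (Fin (n - #T))) :=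
        sum_le_sum fun T _ => card_fiber_lastBlock_le T
    _ = ∑ i ≤ n, n.choose i * Nat.card (Setoid (Fin (n - i))) := by
        rw [← powerset_univ, sum_powerset_apply_card fun i => Nat.card (Setoid (Fin (n - i))),
          card_univ, Fintype.card_fin, Nat.range_succ_eq_Iic]
        simp only [smul_eq_mul]

theorem card_fin_le_bell (n : ℕ) : Nat.card (Setoid (Fin n)) ≤ n.bell := by
  induction n using Nat.strong_induction_on with
  | _ n ih =>
    rcases n with _ | n
    · exact Nat.bell_zero ▸ Finite.card_le_one_iff_subsingleton.2
        ⟨fun _ _ => ext fun a : Fin 0 => a.elim0⟩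
    · rw [Nat.bell_succ]
      refine (card_fin_succ_le n).trans (sum_le_sum fun i _ => ?_)
      exact Nat.mul_le_mul_left _ (ih _ (by omega))

end Setoid

namespace Finpartition

variable {α : Type*} [Fintype α] [DecidableEq α]

theorem parts_eq_image_part (P : Finpartition (univ : Finset α)) :
    P.parts = univ.image P.part := by
  ext t
  refine ⟨fun ht => ?_, ?_⟩
  · obtain ⟨a, -, rfl⟩ := P.part_surjOn ht
    exact mem_image_of_mem _ (mem_univ a)
  · rw [mem_image]
    rintro ⟨a, -, rfl⟩
    exact P.part_mem.2 (mem_univ a)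

theorem ker_part_injective :
    Function.Injective fun P : Finpartition (univ : Finset α) => Setoid.ker P.part := by
  intro P Q h
  have hpart : P.part = Q.part := by
    ext a b
    rw [P.mem_part_iff_part_eq_part (mem_univ b) (mem_univ a),
      Q.mem_part_iff_part_eq_part (mem_univ b) (mem_univ a), ← Setoid.ker_def, ← Setoid.ker_def]
    exact iff_of_eq (congrArg (fun s : Setoid α => s b a) h)
  exact Finpartition.ext (by rw [parts_eq_image_part, parts_eq_image_part, hpart])

end Finpartition

theorem bell_le_card_setoid (n : ℕ) : bell n ≤ Nat.card (Setoid (Fin n)) :=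
  Nat.card_le_card_of_injective _ Finpartition.ker_part_injective

theorem pow_le_pow_mul_exp_sub {u : ℝ} (hu : 0 ≤ u) (n : ℕ) : u ^ n ≤ n ^ n * exp (u - n) := by
  rcases n.eq_zero_or_pos with rfl | hn
  · simpa using one_le_exp hu
  have hn' : (0 : ℝ) < n := Nat.cast_pos.2 hn
  calc u ^ n = n ^ n * (u / n) ^ n := by rw [div_pow, mul_div_cancel₀ _ (by positivity)]
    _ ≤ n ^ n * exp (u / n - 1) ^ n := by
        gcongr
        linarith [add_one_le_exp (u / n - 1)]
    _ = n ^ n * exp (u - n) := by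
        rw [← exp_nat_mul]
        field_simp

theorem natCast_pow_div_factorial_le {t : ℝ} (ht : 0 < t) (n k : ℕ) :
    (k : ℝ) ^ n / k ! ≤ (n / t) ^ n * exp (-n) * (exp t ^ k / k !) := by
  calc (k : ℝ) ^ n / k ! = (t * k) ^ n / t ^ n / k ! := by
        rw [mul_pow, mul_div_cancel_left₀ _ (by positivity)]
    _ ≤ n ^ n * exp (t * k - n) / t ^ n / k ! := by
        gcongr
        exact pow_le_pow_mul_exp_sub (by positivity) n
    _ = (n / t) ^ n * exp (-n) * (exp t ^ k / k !) := by
        rw [← exp_nat_mul, sub_eq_neg_add, exp_add, div_pow, mul_comm t]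
        ring

theorem summable_natCast_pow_div_factorial (n : ℕ) : Summable fun k : ℕ => (k : ℝ) ^ n / k ! :=
  ((summable_pow_div_factorial (exp 1)).mul_left _).of_nonneg_of_le
    (fun _ => by positivity) (natCast_pow_div_factorial_le one_pos n)

theorem tsum_natCast_pow_div_factorial_lt {t : ℝ} (ht : 0 < t) {n : ℕ} (hn : n ≠ 0) :
    ∑' k : ℕ, (k : ℝ) ^ n / k ! < (n / t) ^ n * exp (exp t - n) := by
  calc ∑' k : ℕ, (k : ℝ) ^ n / k ! < ∑' k : ℕ, (n / t) ^ n * exp (-n) * (exp t ^ k / k !) :=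
        Summable.tsum_lt_tsum (i := 0) (natCast_pow_div_factorial_le ht n)
          (by rw [Nat.cast_zero, zero_pow hn, zero_div]; positivity)
          (summable_natCast_pow_div_factorial n) ((summable_pow_div_factorial _).mul_left _)
    _ = (n / t) ^ n * exp (exp t - n) := by
        rw [tsum_mul_left, ← congrFun NormedSpace.exp_eq_tsum_div, ← exp_eq_exp_ℝ, mul_assoc,
          ← exp_add, neg_add_eq_sub]

theorem tsum_natCast_pow_succ_div_factorial (n : ℕ) :
    ∑' k : ℕ, (k : ℝ) ^ (n + 1) / k ! =
      ∑ i ≤ n, n.choose i * ∑' k : ℕ, (k : ℝ) ^ (n - i) / k ! := by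
  have hshift (k : ℕ) : ((k + 1 : ℕ) : ℝ) ^ (n + 1) / (k + 1)! =
      ∑ i ≤ n, n.choose i * ((k : ℝ) ^ (n - i) / k !) := by
    rw [Nat.factorial_succ, Nat.cast_mul, pow_succ', mul_div_mul_left _ _ (by positivity),
      Nat.cast_succ, add_comm, add_pow, sum_div, Nat.range_succ_eq_Iic]
    exact sum_congr rfl fun i _ => by ring
  rw [(summable_natCast_pow_div_factorial (n + 1)).tsum_eq_zero_add, tsum_congr hshift,
    Summable.tsum_finsetSum fun i _ => (summable_natCast_pow_div_factorial _).mul_left _]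
  simp [tsum_mul_left]

theorem Nat.bell_eq_tsum (n : ℕ) : (n.bell : ℝ) = (∑' k : ℕ, (k : ℝ) ^ n / k !) / exp 1 := by
  induction n using Nat.strong_induction_on with
  | _ n ih =>
    rcases n with _ | n
    · rw [Nat.bell_zero, Nat.cast_one, eq_div_iff (exp_ne_zero 1), one_mul, exp_eq_exp_ℝ,
        NormedSpace.exp_eq_tsum_div]
      simp
    · rw [Nat.bell_succ, tsum_natCast_pow_succ_div_factorial, sum_div, Nat.cast_sum]
      refine sum_congr rfl fun i _ => ?_
      rw [Nat.cast_mul, ih _ (Nat.sub_lt_succ n i)]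
      ring

/-- `B_n < (n / ln(n+1))ⁿ` for all `n ≥ 1`. -/
theorem stmt10 (n : ℕ) (hn : 1 ≤ n) :
    (bell n : ℝ) < ((n : ℝ) / Real.log (n + 1)) ^ n := by
  have hlog : 0 < log (n + 1 : ℝ) := log_pos (by norm_cast; omega)
  calc (bell n : ℝ) ≤ n.bell := by
        exact_mod_cast (bell_le_card_setoid n).trans (Setoid.card_fin_le_bell n)
    _ = (∑' k : ℕ, (k : ℝ) ^ n / k !) / exp 1 := Nat.bell_eq_tsum n
    _ < (n / log (n + 1)) ^ n * exp (exp (log (n + 1)) - n) / exp 1 := by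
        gcongr
        exact tsum_natCast_pow_div_factorial_lt hlog (by omega)
    _ = (n / log (n + 1)) ^ n := by
        rw [exp_log (by positivity), add_sub_cancel_left, mul_div_cancel_right₀ _ (exp_ne_zero 1)]
end

section
/- Consider the p-random labeling model: an auxiliary labeling Y' with Δ₂(Y') = 0 is fixed, and Y is obtained by flipping each edge label independently-or-correlated so that P(Y_e ≠ Y'_e) ≤ p for each edge e. Let T be a spanning tree of G with average stretch S, and predict each non-tree edge (i,j) by the product of Y-labels along the tree path from i to j. Then the expected number of prediction mistakes on the non-tree edges is at most p·|E|·(1 + S·|E|/|E|) — more precisely, E[M_T] ≤ p·|E| + p·Σ_{e'∈E∖E_T} |Path_T(e')| ≤ p·|E|·(1 + S). -/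
open scoped Classical
open MeasureTheory

/-!
Since `Δ₂(Y') = 0`, some two-colouring `σ : V → {±1}` has `Y'(u,v) = σ u · σ v` on every edge,
so the product of `Y'` along any walk from `i` to `j` is `σ i · σ j = Y'(i,j)`. A mistake on a
non-tree edge `e` therefore forces a flip on `e` or on one of the edges of its tree path, and the
union bound gives it probability at most `p · (1 + |Path_T(e)|)`. Summing over the at most `|E|`
non-tree edges gives `p · (|E| + Σ |Path_T(e)|) ≤ p · |E| · (1 + S)`.
-/
theorem SimpleGraph.Walk.prod_map_edges_eq_mul {V M : Type*} [CommMonoid M] {H : SimpleGraph V}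
    {σ : V → M} (hσ : ∀ v, σ v * σ v = 1) {Y : Sym2 V → M}
    (hY : ∀ u v, H.Adj u v → Y s(u, v) = σ u * σ v) {u v : V} (w : H.Walk u v) :
    (w.edges.map Y).prod = σ u * σ v := by
  induction w with
  | nil => simp [hσ]
  | @cons u x v h w ih =>
    rw [edges_cons, List.map_cons, List.prod_cons, ih, hY _ _ h,
      mul_assoc, ← mul_assoc (σ x), hσ, one_mul]

section Balanced

variable {V : Type*} [Fintype V] {G : SimpleGraph V} {Y : Sym2 V → ℤ}

theorem exists_clusterCost_eq_zero (h : ccIndex2 G Y = 0) :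
    ∃ f : V → Bool, clusterCost G Y f = 0 :=
  (Nat.sInf_eq_zero.mp h).resolve_right (Set.nonempty_iff_ne_empty.mp ⟨_, fun _ => true, rfl⟩)

theorem apply_eq_mul_of_clusterCost_eq_zero (hY : ∀ e ∈ G.edgeSet, Y e = 1 ∨ Y e = -1)
    {f : V → Bool} (hf : clusterCost G Y f = 0) {u v : V} (huv : G.Adj u v) :
    Y s(u, v) = (if f u then 1 else -1) * (if f v then 1 else -1) := by
  have hcut := Finset.filter_eq_empty_iff.mp (Finset.card_eq_zero.mp hf)
    (G.mem_edgeFinset.mpr (G.mem_edgeSet.mpr huv))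
  simp only [Sym2.lift_mk] at hcut
  rcases hY s(u, v) huv with h | h <;> rw [h] at hcut ⊢ <;>
    cases hu : f u <;> cases hv : f v <;> simp_all

theorem exists_sign_of_ccIndex2_eq_zero (hY : ∀ e ∈ G.edgeSet, Y e = 1 ∨ Y e = -1)
    (h : ccIndex2 G Y = 0) :
    ∃ σ : V → ℤ, (∀ v, σ v * σ v = 1) ∧ ∀ u v, G.Adj u v → Y s(u, v) = σ u * σ v := by
  obtain ⟨f, hf⟩ := exists_clusterCost_eq_zero h
  refine ⟨fun v => if f v then 1 else -1, fun v => ?_,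
    fun u v huv => apply_eq_mul_of_clusterCost_eq_zero hY hf huv⟩
  by_cases hv : f v <;> simp [hv]

theorem prod_map_edges_eq_of_ccIndex2_eq_zero {T : SimpleGraph V} (hTG : T ≤ G)
    (hY : ∀ e ∈ G.edgeSet, Y e = 1 ∨ Y e = -1)
    (h : ccIndex2 G Y = 0) {u v : V} (huv : G.Adj u v) (w : T.Walk u v) :
    (w.edges.map Y).prod = Y s(u, v) := by
  obtain ⟨σ, hσ, hYσ⟩ := exists_sign_of_ccIndex2_eq_zero hY h
  rw [w.prod_map_edges_eq_mul hσ fun x y hxy => hYσ x y (hTG hxy), hYσ u v huv]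

end Balanced

theorem measurable_prod_map {Ω α M : Type*} [MeasurableSpace Ω] [Monoid M] [MeasurableSpace M]
    [MeasurableMul₂ M] {Y : Ω → α → M} (hY : ∀ e, Measurable fun ω => Y ω e) (l : List α) :
    Measurable fun ω => (l.map (Y ω)).prod := by
  induction l with
  | nil => exact measurable_const
  | cons e l ih => exact (hY e).mul ih

theorem setOf_ne_prod_map_subset {Ω α M : Type*} [Monoid M] (Y : Ω → α → M) {Y' : α → M}
    {e : α} {l : List α} (hl : (l.map Y').prod = Y' e) :
    {ω | Y ω e ≠ (l.map (Y ω)).prod} ⊆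
      {ω | Y ω e ≠ Y' e} ∪ ⋃ e' ∈ l.toFinset, {ω | Y ω e' ≠ Y' e'} := by
  intro ω hω
  by_contra hagree
  simp only [Set.mem_union, Set.mem_iUnion, Set.mem_ofPred_eq, List.mem_toFinset, not_or,
    not_exists, not_not] at hagree
  refine hω ?_
  rw [hagree.1, ← hl, List.map_congr_left fun e' he' => hagree.2 e' he']

theorem measureReal_setOf_ne_prod_map_le {Ω α M : Type*} [MeasurableSpace Ω] [Monoid M]
    (μ : Measure Ω) (Y : Ω → α → M) {Y' : α → M} {e : α} {l : List α}
    (hl : (l.map Y').prod = Y' e) {q : ℝ} (hq : 0 ≤ q)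
    (hflip : ∀ e' ∈ e :: l, μ {ω | Y ω e' ≠ Y' e'} ≤ ENNReal.ofReal q) :
    μ.real {ω | Y ω e ≠ (l.map (Y ω)).prod} ≤ (1 + l.length) * q := by
  rw [List.forall_mem_cons] at hflip
  refine ENNReal.toReal_le_of_le_ofReal (by positivity) ?_
  calc μ {ω | Y ω e ≠ (l.map (Y ω)).prod}
      ≤ μ {ω | Y ω e ≠ Y' e} + ∑ e' ∈ l.toFinset, μ {ω | Y ω e' ≠ Y' e'} :=
        (measure_mono (setOf_ne_prod_map_subset Y hl)).trans <|
          (measure_union_le _ _).trans (by gcongr; exact measure_biUnion_finset_le _ _)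
    _ ≤ ENNReal.ofReal q + l.toFinset.card • ENNReal.ofReal q := by
        grw [hflip.1, Finset.sum_le_card_nsmul _ _ _ fun e' he' =>
          hflip.2 e' (List.mem_toFinset.mp he')]
    _ ≤ ENNReal.ofReal ((1 + l.length) * q) := by
        rw [ENNReal.ofReal_mul (by positivity), ENNReal.ofReal_add zero_le_one (by positivity),
          ENNReal.ofReal_one, ENNReal.ofReal_natCast, add_mul, one_mul, nsmul_eq_mul]
        grw [List.toFinset_card_le]

theorem integral_card_filter {Ω ι : Type*} [MeasurableSpace Ω] (μ : Measure Ω)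
    [IsFiniteMeasure μ] (s : Finset ι) (P : Ω → ι → Prop) [∀ ω, DecidablePred (P ω)]
    (hP : ∀ i ∈ s, MeasurableSet {ω | P ω i}) :
    ∫ ω, ((s.filter (P ω)).card : ℝ) ∂μ = ∑ i ∈ s, μ.real {ω | P ω i} := by
  have hcard : ∀ ω, ((s.filter (P ω)).card : ℝ) = ∑ i ∈ s, {ω | P ω i}.indicator 1 ω := by
    intro ω
    rw [Finset.card_filter, Nat.cast_sum]
    refine Finset.sum_congr rfl fun i _ => ?_
    by_cases h : P ω i <;> simp [h]
  simp_rw [hcard]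
  rw [integral_finsetSum s fun i hi => (integrable_const 1).indicator (hP i hi)]
  exact Finset.sum_congr rfl fun i hi => integral_indicator_one (hP i hi)

theorem card_sdiff_add_sum_le_card_mul {V : Type*} [Fintype V] (G : SimpleGraph V)
    (s : Finset (Sym2 V)) (ℓ : Sym2 V → ℝ) {S : ℝ}
    (hS : S = (1 / (G.edgeFinset.card : ℝ)) *
      (((Fintype.card V : ℝ) - 1) + ∑ e ∈ G.edgeFinset \ s, ℓ e)) :
    ((G.edgeFinset \ s).card : ℝ) + ∑ e ∈ G.edgeFinset \ s, ℓ e ≤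
      G.edgeFinset.card * (1 + S) := by
  obtain hE | ⟨e, he⟩ := G.edgeFinset.eq_empty_or_nonempty
  · simp [hE]
  have hEpos : (0 : ℝ) < G.edgeFinset.card := by exact_mod_cast Finset.card_pos.mpr ⟨e, he⟩
  have hV : (1 : ℝ) ≤ Fintype.card V := by
    have : Nonempty V := ⟨(Quot.out e).1⟩
    exact_mod_cast Fintype.card_pos
  have hD : ((G.edgeFinset \ s).card : ℝ) ≤ G.edgeFinset.card := by
    exact_mod_cast Finset.card_le_card Finset.sdiff_subset
  rw [hS, mul_add, mul_one, ← mul_assoc, mul_one_div_cancel hEpos.ne', one_mul]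
  linarith

theorem stmt13_general {V : Type*} [Fintype V] (G T : SimpleGraph V) (hTG : T ≤ G)
    (a b : Sym2 V → V) (hab : ∀ e : Sym2 V, e = s(a e, b e))
    (path : ∀ u v : V, T.Walk u v)
    {Ω : Type*} [MeasurableSpace Ω] (μ : Measure Ω) [IsProbabilityMeasure μ]
    (Y : Ω → Sym2 V → ℤ) (hmeas : ∀ e, Measurable fun ω => Y ω e)
    (Y' : Sym2 V → ℤ) (hY' : ∀ e ∈ G.edgeSet, Y' e = 1 ∨ Y' e = -1)
    (hbal : ccIndex2 G Y' = 0)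
    (p : ℝ) (hp : 0 ≤ p)
    (hflip : ∀ e ∈ G.edgeSet, μ {ω | Y ω e ≠ Y' e} ≤ ENNReal.ofReal p)
    (S : ℝ)
    (hS : S = (1 / (G.edgeFinset.card : ℝ)) *
      (((Fintype.card V : ℝ) - 1) +
        ∑ e ∈ G.edgeFinset \ T.edgeFinset, ((path (a e) (b e)).length : ℝ))) :
    ∫ ω, ((((G.edgeFinset \ T.edgeFinset).filter fun e =>
        Y ω e ≠ ((path (a e) (b e)).edges.map (Y ω)).prod).card : ℝ)) ∂μ ≤
      p * (G.edgeFinset.card : ℝ) * (1 + S) := by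
  have hadj : ∀ e ∈ G.edgeFinset \ T.edgeFinset, G.Adj (a e) (b e) := fun e he => by
    rw [← SimpleGraph.mem_edgeSet, ← hab e, ← SimpleGraph.mem_edgeFinset]
    exact (Finset.mem_sdiff.mp he).1
  have hpredict : ∀ e ∈ G.edgeFinset \ T.edgeFinset,
      ((path (a e) (b e)).edges.map Y').prod = Y' e := fun e he => by
    rw [prod_map_edges_eq_of_ccIndex2_eq_zero hTG hY' hbal (hadj e he), ← hab e]
  have hmistake : ∀ e ∈ G.edgeFinset \ T.edgeFinset,
      μ.real {ω | Y ω e ≠ ((path (a e) (b e)).edges.map (Y ω)).prod} ≤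
        (1 + (path (a e) (b e)).length) * p := fun e he => by
    rw [← (path (a e) (b e)).length_edges]
    refine measureReal_setOf_ne_prod_map_le μ Y (hpredict e he) hp fun e' he' => hflip e' ?_
    rcases List.mem_cons.mp he' with rfl | he'
    · rw [hab e']; exact hadj e' he
    · exact SimpleGraph.edgeSet_mono hTG ((path (a e) (b e)).edges_subset_edgeSet he')
  calc _ = ∑ e ∈ G.edgeFinset \ T.edgeFinset,
          μ.real {ω | Y ω e ≠ ((path (a e) (b e)).edges.map (Y ω)).prod} :=
        integral_card_filter μ _ _ fun e _ =>
          (measurableSet_eq_fun (hmeas e) (measurable_prod_map hmeas _)).compl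
    _ ≤ ∑ e ∈ G.edgeFinset \ T.edgeFinset, (1 + ((path (a e) (b e)).length : ℝ)) * p :=
        Finset.sum_le_sum hmistake
    _ = p * (((G.edgeFinset \ T.edgeFinset).card : ℝ) +
          ∑ e ∈ G.edgeFinset \ T.edgeFinset, ((path (a e) (b e)).length : ℝ)) := by
        rw [← Finset.sum_mul, Finset.sum_add_distrib, Finset.sum_const, nsmul_one, mul_comm]
    _ ≤ p * (G.edgeFinset.card : ℝ) * (1 + S) := by
        rw [mul_assoc]
        exact mul_le_mul_of_nonneg_left (card_sdiff_add_sum_le_card_mul G _ _ hS) hp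

/-- In the `p`-random model (labels of a balanced labeling `Y'` flipped with probability
at most `p` per edge), predicting each non-tree edge by the product of labels along the
tree path of a spanning tree `T` of average stretch `S` makes at most
`p·|E|·(1 + S)` mistakes in expectation. -/
theorem stmt13 {V : Type*} [Fintype V] (G T : SimpleGraph V) (hTG : T ≤ G)
    (hTree : T.IsTree)
    (a b : Sym2 V → V) (hab : ∀ e : Sym2 V, e = s(a e, b e))
    (path : ∀ u v : V, T.Walk u v) (hpath : ∀ u v, (path u v).IsPath)
    {Ω : Type*} [MeasurableSpace Ω] (μ : Measure Ω) [IsProbabilityMeasure μ]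
    (Y : Ω → Sym2 V → ℤ) (hmeas : ∀ e, Measurable fun ω => Y ω e)
    (Y' : Sym2 V → ℤ) (hY' : ∀ e ∈ G.edgeSet, Y' e = 1 ∨ Y' e = -1)
    (hbal : ccIndex2 G Y' = 0)
    (p : ℝ) (hp : 0 ≤ p)
    (hflip : ∀ e ∈ G.edgeSet, μ {ω | Y ω e ≠ Y' e} ≤ ENNReal.ofReal p)
    (S : ℝ)
    (hS : S = (1 / (G.edgeFinset.card : ℝ)) *
      (((Fintype.card V : ℝ) - 1) +
        ∑ e ∈ G.edgeFinset \ T.edgeFinset, ((path (a e) (b e)).length : ℝ))) :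
    ∫ ω, ((((G.edgeFinset \ T.edgeFinset).filter fun e =>
        Y ω e ≠ ((path (a e) (b e)).edges.map (Y ω)).prod).card : ℝ)) ∂μ ≤
      p * (G.edgeFinset.card : ℝ) * (1 + S) :=
  stmt13_general G T hTG a b hab path μ Y hmeas Y' hY' hbal p hp hflip S hS
end

section
/- In any active learning scheme based on a circuit covering 𝒞(G), where each test edge e lies on a circuit C_e whose other edges are all queried and Y_e is predicted by the product of labels along C_e ∖ {e}, the total number of prediction mistakes is at most Σ_{e ∈ E_Δ} L_e, where E_Δ is the set of δ-edges with respect to an optimal two-clustering and L_e is the number of circuits of 𝒞(G) containing e. In particular, if L_e ≤ L for all e, the number of mistakes is at most Δ₂(Y)·L. -/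
open scoped Classical

/-- The sign `σ(u)·σ(v)` of an unordered pair, for a two-clustering `σ : V → {±1}`. -/
def sigmaProd {V : Type*} (σ : V → ℤ) : Sym2 V → ℤ :=
  Sym2.lift ⟨fun u v => σ u * σ v, fun _ _ => mul_comm _ _⟩

/-- Circuit-covering prediction: the number of mistakes is at most the total load of
the δ-edges; in particular at most `Δ₂(Y)·L` if every load is at most `L`. -/
theorem stmt17 {V : Type*} [Fintype V] (G : SimpleGraph V) (Y : Sym2 V → ℤ)
    (hY : ∀ e ∈ G.edgeSet, Y e = 1 ∨ Y e = -1)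
    (σ : V → ℤ) (hσ : ∀ v, σ v = 1 ∨ σ v = -1)
    (hopt : (G.edgeFinset.filter fun e => Y e ≠ sigmaProd σ e).card = ccIndex2 G Y)
    (Tst : Finset (Sym2 V)) (hTst : Tst ⊆ G.edgeFinset)
    (r : Sym2 V → V) (C : ∀ e : Sym2 V, G.Walk (r e) (r e))
    (hC : ∀ e ∈ Tst, e ∈ (C e).edges) :
    ((Tst.filter fun e => Y e ≠ (((C e).edges.erase e).map Y).prod).card ≤
      ∑ f ∈ G.edgeFinset.filter fun e => Y e ≠ sigmaProd σ e,
        (Tst.filter fun e' => f ∈ (C e').edges).card) ∧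
    (∀ L : ℕ, (∀ f ∈ G.edgeFinset, (Tst.filter fun e' => f ∈ (C e').edges).card ≤ L) →
      (Tst.filter fun e => Y e ≠ (((C e).edges.erase e).map Y).prod).card ≤
        ccIndex2 G Y * L) := by
  have hwalk : ∀ {u v : V} (W : G.Walk u v),
      (W.edges.map (sigmaProd σ)).prod = σ u * σ v := by
    intro u v W
    induction W with
    | nil =>
        rename_i w
        rcases hσ w with h | h <;> simp [h]
    | cons h p ih =>
        rename_i a b c
        simp only [SimpleGraph.Walk.edges_cons, List.map_cons, List.prod_cons, ih]
        have : sigmaProd σ s(a, b) = σ a * σ b := rfl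
        rw [this]
        have : σ b * σ b = 1 := by rcases hσ b with h | h <;> simp [h]
        calc σ a * σ b * (σ b * σ c) = σ a * (σ b * σ b) * σ c := by ring
          _ = σ a * σ c := by rw [this]; ring
  -- a mistake on e implies there is a δ-edge on C e
  have key : ∀ e ∈ Tst, Y e ≠ (((C e).edges.erase e).map Y).prod →
      ∃ f ∈ G.edgeFinset.filter fun e => Y e ≠ sigmaProd σ e, f ∈ (C e).edges := by
    intro e he hmis
    by_contra hcon
    push_neg at hcon
    have hall : ∀ f ∈ (C e).edges, Y f = sigmaProd σ f := by
      intro f hf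
      by_contra hne
      exact hcon f (Finset.mem_filter.2 ⟨SimpleGraph.mem_edgeFinset.2
        ((C e).edges_subset_edgeSet hf), hne⟩) hf
    have hprodall : (((C e).edges).map Y).prod = 1 := by
      have := hwalk (C e)
      have heq : (((C e).edges).map Y) = (((C e).edges).map (sigmaProd σ)) :=
        List.map_congr_left hall
      rw [heq, this]
      rcases hσ (r e) with h | h <;> simp [h]
    have hme : e ∈ (C e).edges := hC e he
    have hperm : List.Perm (C e).edges (e :: ((C e).edges.erase e)) := List.perm_cons_erase hme
    have hsplit : (((C e).edges).map Y).prod = Y e * (((C e).edges.erase e).map Y).prod := by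
      rw [List.Perm.prod_eq (List.Perm.map Y hperm)]; simp
    have hYe : Y e = 1 ∨ Y e = -1 :=
      hY e ((C e).edges_subset_edgeSet hme)
    apply hmis
    have : Y e * (((C e).edges.erase e).map Y).prod = 1 := by rw [← hsplit, hprodall]
    rcases hYe with h | h <;>
      · rw [h] at this ⊢; linarith
  have main : (Tst.filter fun e => Y e ≠ (((C e).edges.erase e).map Y).prod).card ≤
      ∑ f ∈ G.edgeFinset.filter fun e => Y e ≠ sigmaProd σ e,
        (Tst.filter fun e' => f ∈ (C e').edges).card := by
    calc (Tst.filter fun e => Y e ≠ (((C e).edges.erase e).map Y).prod).card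
        ≤ ((G.edgeFinset.filter fun e => Y e ≠ sigmaProd σ e).biUnion
            fun f => Tst.filter fun e' => f ∈ (C e').edges).card := by
          apply Finset.card_le_card
          intro e he
          rw [Finset.mem_filter] at he
          obtain ⟨f, hf, hfe⟩ := key e he.1 he.2
          exact Finset.mem_biUnion.2 ⟨f, hf, Finset.mem_filter.2 ⟨he.1, hfe⟩⟩
      _ ≤ _ := Finset.card_biUnion_le
  refine ⟨main, fun L hL => ?_⟩
  calc (Tst.filter fun e => Y e ≠ (((C e).edges.erase e).map Y).prod).card
      ≤ ∑ f ∈ G.edgeFinset.filter fun e => Y e ≠ sigmaProd σ e,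
        (Tst.filter fun e' => f ∈ (C e').edges).card := main
    _ ≤ (G.edgeFinset.filter fun e => Y e ≠ sigmaProd σ e).card * L := by
        apply Finset.sum_le_card_nsmul
        intro f hf
        exact hL f (Finset.mem_filter.1 hf).1
    _ = ccIndex2 G Y * L := by rw [hopt]
end
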